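/- arXiv:1409.1156 — 4 statements merged into one kernel-verified Lean document; each statement's English description precedes it below -/
import Mathlib

section
/- Let $(\Omega,\mathcal{F},\mathbb{P})$ be a probability space endowed with a measure-preserving $\mathbb{Z}^d$-group action $\{\theta_k\}_{k \in \mathbb{Z}^d}$, and let $\ell : \Omega \to \mathcal{L}(\mathbb{R}^d)$ be an increment-stationary random point set with associated random vectors $\{Y_k\}_{k \in \mathbb{Z}^d}$. Let $V : \mathbb{R}^d \setminus \{0\} \to [0,\infty)$ be a nonnegative two-body potential and for $R > 0$ set $Q_R := [-R,R)^d$. Then for every $k \in \mathbb{Z}^d$ and almost every $\omega \in \Omega$, $\limsup_{R \to \infty} |Q_R|^{-1} \mathcal{E}(\ell(\theta_k\omega), Q_R) = \limsup_{R \to \infty} |Q_R|^{-1} \mathcal{E}(\ell(\omega), Q_R)$ (as elements of $[0,\infty]$). If moreover the group action is ergodic, then there is a deterministic $e^* \in [0,\infty]$ such that $\limsup_{R \to \infty} |Q_R|^{-1} \mathcal{E}(\ell(\omega), Q_R) = e^*$ for almost every $\omega$. -/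
open MeasureTheory Filter
open scoped ENNReal BigOperators

noncomputable section

/-- Euclidean space `ℝ^d`. -/
abbrev Rd (d : ℕ) : Type := EuclideanSpace ℝ (Fin d)

/-- The lattice `ℤ^d`. -/
abbrev Zd (d : ℕ) : Type := Fin d → ℤ

variable {d : ℕ}

/-- Cast of a lattice vector to `ℝ^d`. -/
def castZ (k : Zd d) : Rd d := WithLp.toLp 2 (fun i => (k i : ℝ))

/-- Cast of a plain vector to `ℝ^d`. -/
def castR (v : Fin d → ℝ) : Rd d := WithLp.toLp 2 v

/-- The `l`-th canonical basis vector of `ℤ^d`. -/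
def zbasis (l : Fin d) : Zd d := Pi.single l 1

/-- A set of points is locally finite if it has finitely many points in every closed ball. -/
def LocFin {d : ℕ} (s : Set (Rd d)) : Prop :=
  ∀ R : ℝ, (s ∩ Metric.closedBall 0 R).Finite

/- The two-body interaction energy of the point set `s` in the region `D`, for the
(nonnegative) two-body potential `V`; valued in `[0,∞]`. -/
open Classical in
def energy {d : ℕ} (V : Rd d → ℝ) (s D : Set (Rd d)) : ℝ≥0∞ :=
  (1/2 : ℝ≥0∞) * ∑' x : ↥(s ∩ D), ∑' y : ↥(s ∩ D),
    if (x : Rd d) ≠ (y : Rd d) then ENNReal.ofReal (V ((x : Rd d) - (y : Rd d))) else 0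

/-- The cube `Q_R = [-R,R)^d`. -/
def QR (d : ℕ) (R : ℝ) : Set (Rd d) := {x | ∀ i, -R ≤ x i ∧ x i < R}

/-!
The energy of the translate `s + v` in `Q_R` is the energy of `s` in `Q_R - v`, which lies between
its energies in `Q_{R-‖v‖}` and `Q_{R+‖v‖}`; since `|Q_{R±c}| / |Q_R| → 1`, the upper energy density
is translation invariant, hence (by increment-stationarity) a.e. invariant under the action.
For an ergodic action, an a.e. invariant measurable set `A` agrees a.e. with the strictly
invariant set `⋃ₖ θₖ⁻¹ A`, so it is null or conull, and an a.e. invariant measurable function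
is a.e. constant. The density is measurable because, energy being monotone in `R`, its `limsup`
over `R → ∞` equals the one along the integers.
-/

open Topology

lemma QR_mono : Monotone (QR d) := fun _ _ h _ hx i =>
  ⟨(neg_le_neg h).trans (hx i).1, (hx i).2.trans_le h⟩

lemma QR_subset_preimage_add (v : Rd d) (R : ℝ) :
    QR d (R - ‖v‖) ⊆ (· + v) ⁻¹' QR d R := by
  intro x hx i
  have hv := (abs_le.1 ((Real.norm_eq_abs _).symm.trans_le (PiLp.norm_apply_le v i)))
  have hx := hx i
  show -R ≤ x i + v i ∧ x i + v i < R
  constructor <;> linarith [hx.1, hx.2]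

lemma preimage_add_subset_QR (v : Rd d) (R : ℝ) :
    (· + v) ⁻¹' QR d R ⊆ QR d (R + ‖v‖) := by
  intro x hx i
  have hv := (abs_le.1 ((Real.norm_eq_abs _).symm.trans_le (PiLp.norm_apply_le v i)))
  have hx : -R ≤ x i + v i ∧ x i + v i < R := hx i
  constructor <;> linarith [hx.1, hx.2]

section Energy

variable (V : Rd d → ℝ)

lemma energy_mono (s : Set (Rd d)) {D D' : Set (Rd d)} (h : D ⊆ D') :
    energy V s D ≤ energy V s D' := by
  have hincl : Function.Injective (Set.inclusion (Set.inter_subset_inter_right s h)) :=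
    Set.inclusion_injective _
  unfold energy
  gcongr
  refine (ENNReal.tsum_le_tsum fun x => ?_).trans (ENNReal.tsum_comp_le_tsum_of_injective hincl _)
  exact ENNReal.tsum_comp_le_tsum_of_injective hincl _

lemma energy_image_add (s D : Set (Rd d)) (v : Rd d) :
    energy V ((· + v) '' s) D = energy V s ((· + v) ⁻¹' D) := by
  let e := Equiv.Set.image (· + v) (s ∩ (· + v) ⁻¹' D) (add_left_injective v)
  unfold energy
  rw [← Set.image_inter_preimage, ← e.tsum_eq]
  congr 1
  refine tsum_congr fun x => ?_
  rw [← e.tsum_eq]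
  refine tsum_congr fun y => ?_
  simp [e, add_sub_add_right_eq_sub]

end Energy

lemma ENNReal.limsup_mul_of_tendsto_one {ι : Type*} {l : Filter ι} [l.NeBot] {u v : ι → ℝ≥0∞}
    (hu : Tendsto u l (𝓝 1)) : limsup (u * v) l = limsup v l := by
  apply le_antisymm
  · simpa [hu.limsup_eq] using ENNReal.limsup_mul_le' (u := u) (v := v) (f := l)
      (by simp [hu.limsup_eq]) (by simp [hu.limsup_eq])
  · simpa [hu.liminf_eq, mul_comm] using ENNReal.le_limsup_mul (u := v) (v := u) (f := l)

lemma tendsto_ofReal_cube_add_div (c : ℝ) :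
    Tendsto (fun R : ℝ => ENNReal.ofReal ((2 * (R + c)) ^ d) / ENNReal.ofReal ((2 * R) ^ d))
      atTop (𝓝 1) := by
  have hratio : Tendsto (fun R : ℝ => (1 + c / R) ^ d) atTop (𝓝 1) := by
    simpa using (((tendsto_const_nhds (x := c)).div_atTop (tendsto_id (α := ℝ))).const_add 1).pow d
  rw [← ENNReal.ofReal_one]
  refine (ENNReal.tendsto_ofReal hratio).congr' ?_
  filter_upwards [eventually_gt_atTop 0] with R hR
  rw [← ENNReal.ofReal_div_of_pos (by positivity), ← div_pow]
  congr 2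
  field_simp

lemma limsup_inv_ofReal_cube_mul_add {α : Type*} {l : Filter α} [l.NeBot] {φ : α → ℝ}
    (hφ : Tendsto φ l atTop) (c : ℝ) (u : α → ℝ≥0∞) :
    limsup (fun x => (ENNReal.ofReal ((2 * φ x) ^ d))⁻¹ * u x) l
      = limsup (fun x => (ENNReal.ofReal ((2 * (φ x + c)) ^ d))⁻¹ * u x) l := by
  rw [← ENNReal.limsup_mul_of_tendsto_one
    (v := fun x => (ENNReal.ofReal ((2 * (φ x + c)) ^ d))⁻¹ * u x)
    ((tendsto_ofReal_cube_add_div c).comp hφ)]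
  refine limsup_congr ?_
  filter_upwards [hφ.eventually (eventually_gt_atTop (-c))] with x hx
  have hpos : ENNReal.ofReal ((2 * (φ x + c)) ^ d) ≠ 0 := by
    rw [ne_eq, ENNReal.ofReal_eq_zero, not_le]
    exact pow_pos (by linarith) d
  simp only [Function.comp_apply, Pi.mul_apply, div_eq_mul_inv]
  rw [mul_comm (ENNReal.ofReal ((2 * (φ x + c)) ^ d)), mul_assoc, ← mul_assoc _ _ (u x),
    ENNReal.mul_inv_cancel hpos ENNReal.ofReal_ne_top, one_mul]

lemma limsup_inv_ofReal_cube_mul_comp_add (E : ℝ → ℝ≥0∞) (c : ℝ) :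
    limsup (fun R : ℝ => (ENNReal.ofReal ((2 * R) ^ d))⁻¹ * E (R + c)) atTop
      = limsup (fun R : ℝ => (ENNReal.ofReal ((2 * R) ^ d))⁻¹ * E R) atTop := by
  rw [limsup_inv_ofReal_cube_mul_add (φ := fun R => R) tendsto_id c]
  exact (limsup_comp (fun R : ℝ => (ENNReal.ofReal ((2 * R) ^ d))⁻¹ * E R) (· + c) atTop).trans
    (by rw [map_add_atTop_eq])

lemma limsup_inv_ofReal_cube_mul_eq_nat {E : ℝ → ℝ≥0∞} (hE : Monotone E) :
    limsup (fun R : ℝ => (ENNReal.ofReal ((2 * R) ^ d))⁻¹ * E R) atTop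
      = limsup (fun n : ℕ => (ENNReal.ofReal ((2 * n) ^ d))⁻¹ * E n) atTop := by
  set f : ℝ → ℝ≥0∞ := fun R => (ENNReal.ofReal ((2 * R) ^ d))⁻¹ * E R
  refine le_antisymm ?_ ((limsup_comp f _ _).trans_le
    (limsup_le_limsup_of_le tendsto_natCast_atTop_atTop))
  set w : ℕ → ℝ≥0∞ := fun n => (ENNReal.ofReal ((2 * n) ^ d))⁻¹ * E (n + 1)
  have hfloor : ∀ᶠ R in atTop, f R ≤ w ⌊R⌋₊ := by
    filter_upwards [eventually_ge_atTop 0] with R hR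
    refine mul_le_mul' (ENNReal.inv_le_inv' (ENNReal.ofReal_le_ofReal ?_))
      (hE (Nat.lt_floor_add_one R).le)
    exact pow_le_pow_left₀ (by positivity) (by linarith [Nat.floor_le hR]) d
  calc limsup f atTop ≤ limsup (w ∘ fun R : ℝ => ⌊R⌋₊) atTop := limsup_le_limsup hfloor
    _ ≤ limsup w atTop :=
        (limsup_comp w _ _).trans_le (limsup_le_limsup_of_le tendsto_nat_floor_atTop)
    _ = limsup (fun n : ℕ => f (n + 1)) atTop :=
        limsup_inv_ofReal_cube_mul_add tendsto_natCast_atTop_atTop 1 _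
    _ = limsup (fun n : ℕ => f n) atTop := by
        simpa using limsup_nat_add (fun n : ℕ => f n) 1

section EnergyDensity

variable (V : Rd d → ℝ)

def upperEnergyDensity (s : Set (Rd d)) : ℝ≥0∞ :=
  limsup (fun R : ℝ => (ENNReal.ofReal ((2 * R) ^ d))⁻¹ * energy V s (QR d R)) atTop

lemma upperEnergyDensity_eq_limsup_nat (s : Set (Rd d)) :
    upperEnergyDensity V s
      = limsup (fun n : ℕ => (ENNReal.ofReal ((2 * n) ^ d))⁻¹ * energy V s (QR d n)) atTop :=
  limsup_inv_ofReal_cube_mul_eq_nat fun _ _ h => energy_mono V s (QR_mono h)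

lemma upperEnergyDensity_image_add (s : Set (Rd d)) (v : Rd d) :
    upperEnergyDensity V ((· + v) '' s) = upperEnergyDensity V s := by
  unfold upperEnergyDensity
  simp only [energy_image_add]
  apply le_antisymm
  · calc _ ≤ limsup (fun R : ℝ =>
          (ENNReal.ofReal ((2 * R) ^ d))⁻¹ * energy V s (QR d (R + ‖v‖))) atTop :=
          limsup_le_limsup (.of_forall fun R =>
            mul_le_mul_right (energy_mono V s (preimage_add_subset_QR v R)) _)
      _ = _ := limsup_inv_ofReal_cube_mul_comp_add (fun R => energy V s (QR d R)) ‖v‖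
  · calc _ = limsup (fun R : ℝ =>
          (ENNReal.ofReal ((2 * R) ^ d))⁻¹ * energy V s (QR d (R - ‖v‖))) atTop := by
          simpa only [sub_eq_add_neg] using
            (limsup_inv_ofReal_cube_mul_comp_add (fun R => energy V s (QR d R)) (-‖v‖)).symm
      _ ≤ _ := limsup_le_limsup (.of_forall fun R =>
            mul_le_mul_right (energy_mono V s (QR_subset_preimage_add v R)) _)

end EnergyDensity

section ErgodicFamily

variable {G Ω : Type*} [AddGroup G] [Countable G] [MeasurableSpace Ω] {P : Measure Ω}
  {θ : G → Ω → Ω}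

lemma measure_eq_zero_or_one_of_ae_invariant (hθ : ∀ k, Measurable (θ k))
    (hgrp : ∀ k k', θ (k + k') = θ k ∘ θ k')
    (herg : ∀ A : Set Ω, MeasurableSet A → (∀ k, θ k ⁻¹' A = A) → P A = 0 ∨ P A = 1)
    {A : Set Ω} (hA : MeasurableSet A) (hinv : ∀ k, θ k ⁻¹' A =ᵐ[P] A) :
    P A = 0 ∨ P A = 1 := by
  set B := ⋃ k, θ k ⁻¹' A
  have hB_inv : ∀ j, θ j ⁻¹' B = B := fun j => by
    simp only [B, Set.preimage_iUnion, ← Set.preimage_comp, ← hgrp]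
    exact (Equiv.addRight j).surjective.iUnion_comp (fun k => θ k ⁻¹' A)
  have hBA : B =ᵐ[P] A :=
    (Filter.EventuallyEq.countable_iUnion hinv).trans (.of_eq (Set.iUnion_const A))
  rw [← measure_congr hBA]
  exact herg B (.iUnion fun k => hθ k hA) hB_inv

lemma exists_ae_eq_const_of_ae_invariant [IsProbabilityMeasure P] {X : Type*} [MeasurableSpace X]
    [Nonempty X] [MeasurableSpace.CountablySeparated X] (hθ : ∀ k, Measurable (θ k))
    (hgrp : ∀ k k', θ (k + k') = θ k ∘ θ k')
    (herg : ∀ A : Set Ω, MeasurableSet A → (∀ k, θ k ⁻¹' A = A) → P A = 0 ∨ P A = 1)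
    {g : Ω → X} (hg : Measurable g) (hinv : ∀ k, g ∘ θ k =ᵐ[P] g) :
    ∃ c, g =ᵐ[P] Function.const Ω c := by
  refine exists_eventuallyEq_const_of_forall_separating MeasurableSet fun U hU => ?_
  have hinvU : ∀ k, θ k ⁻¹' (g ⁻¹' U) =ᵐ[P] g ⁻¹' U := fun k =>
    ((hinv k).mono fun ω hω => by simp only [Set.mem_preimage, ← hω]; rfl).set_eq
  rcases measure_eq_zero_or_one_of_ae_invariant hθ hgrp herg (hg hU) hinvU with h0 | h1
  · exact .inr (measure_eq_zero_iff_ae_notMem.1 h0)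
  · exact .inl ((ae_iff_measure_eq (hg hU).nullMeasurableSet).2 (by rw [measure_univ]; exact h1))

end ErgodicFamily

theorem statement1_general {d : ℕ} {Ω : Type} [MeasurableSpace Ω] (P : Measure Ω)
    [IsProbabilityMeasure P] (θ : Zd d → Ω → Ω)
    (hmp : ∀ k, MeasurePreserving (θ k) P P)
    (hgrp : ∀ k k', θ (k + k') = θ k ∘ θ k')
    (ℓ : Ω → Set (Rd d))
    (Y : Zd d → Ω → Rd d)
    (hstat : ∀ᵐ ω ∂P, ∀ k, ℓ (θ k ω) = (fun x => x + Y k ω) '' ℓ ω)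
    (V : Rd d → ℝ)
    (hmeas : ∀ R : ℝ, Measurable fun ω => energy V (ℓ ω) (QR d R)) :
    (∀ k : Zd d, ∀ᵐ ω ∂P,
        Filter.limsup (fun R : ℝ =>
          (ENNReal.ofReal ((2*R)^d))⁻¹ * energy V (ℓ (θ k ω)) (QR d R)) Filter.atTop
        = Filter.limsup (fun R : ℝ =>
          (ENNReal.ofReal ((2*R)^d))⁻¹ * energy V (ℓ ω) (QR d R)) Filter.atTop) ∧
    ((∀ A : Set Ω, MeasurableSet A → (∀ k, θ k ⁻¹' A = A) → P A = 0 ∨ P A = 1) →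
      ∃ estar : ℝ≥0∞, ∀ᵐ ω ∂P,
        Filter.limsup (fun R : ℝ =>
          (ENNReal.ofReal ((2*R)^d))⁻¹ * energy V (ℓ ω) (QR d R)) Filter.atTop = estar) := by
  have hinv : ∀ k, ∀ᵐ ω ∂P, upperEnergyDensity V (ℓ (θ k ω)) = upperEnergyDensity V (ℓ ω) :=
    fun k => by
      filter_upwards [hstat] with ω hω
      rw [hω k, upperEnergyDensity_image_add]
  refine ⟨hinv, fun herg => ?_⟩
  have hmeas_density : Measurable fun ω => upperEnergyDensity V (ℓ ω) := by
    simp only [upperEnergyDensity_eq_limsup_nat]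
    exact .limsup fun n => (hmeas n).const_mul _
  exact exists_ae_eq_const_of_ae_invariant (fun k => (hmp k).measurable) hgrp herg
    hmeas_density hinv

/-- For an increment-stationary random point set, the normalized energy
`limsup` is invariant under the group action, and if the action is ergodic it is a.s. a
deterministic constant `e* ∈ [0,∞]`. -/
theorem statement1 {d : ℕ} {Ω : Type} [MeasurableSpace Ω] (P : Measure Ω)
    [IsProbabilityMeasure P] (θ : Zd d → Ω → Ω)
    (hmp : ∀ k, MeasurePreserving (θ k) P P) (hid : θ 0 = id)
    (hgrp : ∀ k k', θ (k + k') = θ k ∘ θ k')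
    (ℓ : Ω → Set (Rd d)) (hloc : ∀ ω, LocFin (ℓ ω))
    (Y : Zd d → Ω → Rd d) (hY2 : ∀ k, MemLp (Y k) 2 P)
    (hstat : ∀ᵐ ω ∂P, ∀ k, ℓ (θ k ω) = (fun x => x + Y k ω) '' ℓ ω)
    (hY0 : ∀ ω, Y 0 ω = 0)
    (hcoc : ∀ i j k : Zd d, ∀ᵐ ω ∂P,
      Y j (θ k ω) - Y i (θ k ω) = Y (j + k) ω - Y (i + k) ω)
    (V : Rd d → ℝ) (hV : ∀ x, 0 ≤ V x)
    (hmeas : ∀ R : ℝ, Measurable fun ω => energy V (ℓ ω) (QR d R)) :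
    (∀ k : Zd d, ∀ᵐ ω ∂P,
        Filter.limsup (fun R : ℝ =>
          (ENNReal.ofReal ((2*R)^d))⁻¹ * energy V (ℓ (θ k ω)) (QR d R)) Filter.atTop
        = Filter.limsup (fun R : ℝ =>
          (ENNReal.ofReal ((2*R)^d))⁻¹ * energy V (ℓ ω) (QR d R)) Filter.atTop) ∧
    ((∀ A : Set Ω, MeasurableSet A → (∀ k, θ k ⁻¹' A = A) → P A = 0 ∨ P A = 1) →
      ∃ estar : ℝ≥0∞, ∀ᵐ ω ∂P,
        Filter.limsup (fun R : ℝ =>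
          (ENNReal.ofReal ((2*R)^d))⁻¹ * energy V (ℓ ω) (QR d R)) Filter.atTop = estar) :=
  statement1_general P θ hmp hgrp ℓ Y hstat V hmeas
end
end

section
/- Let $(\Omega,\mathcal{F},\mathbb{P})$ be a probability space endowed with an ergodic measure-preserving $\mathbb{Z}^d$-group action $\{\theta_k\}_{k \in \mathbb{Z}^d}$, and let $\ell : \Omega \to \mathcal{L}(\mathbb{R}^d)$ be an increment-stationary random point set with associated random vectors $\{Y_k\}_{k \in \mathbb{Z}^d}$, and with $\phi_{\mu,i}$, $\zeta_i$, $Z_{e_l}$ defined as usual. Assume $\ell$ is non-degenerate (for almost every $\omega$: if $X \in \mathbb{R}^d$ satisfies $\ell(\omega) + X = \ell(\omega)$ then $X = 0$) and stationary up to translation, i.e. there exist $\tilde{Y} \in L^2(\Omega,\mathbb{R}^d)$ with $\mathbb{E}[\tilde{Y}] = 0$ and a deterministic matrix $T$ such that $\ell(\theta_k\omega) + \tilde{Y}(\theta_k\omega) = \ell(\omega) + \tilde{Y}(\omega) + Tk$ for all $k$ and almost every $\omega$. Then $\sup_{\mu > 0} \max_{i \in \{1,\dots,d\}} \mathbb{E}[\phi_{\mu,i}^2]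 < \infty$; more precisely, $\mathbb{E}[\phi_{\mu,i}^2] \le 4\,\mathbb{E}[(\tilde{Y} \cdot e_i)^2]$ for all $\mu > 0$ and $i$. -/
open MeasureTheory Filter
open scoped ENNReal BigOperators

noncomputable section

variable {d : ℕ}

/-- The difference operator `D_l ψ (ω) = ψ(θ_{e_l} ω) - ψ(ω)`. -/
def Dl {d : ℕ} {Ω : Type*} (θ : Zd d → Ω → Ω) (l : Fin d) (ψ : Ω → ℝ) (ω : Ω) : ℝ :=
  ψ (θ (zbasis l) ω) - ψ ω

/-- `φ` is a weak solution in `L²(Ω)` of `E[μ φ ψ + Dψ · Dφ] = E[Dψ · ζ]` for all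
`ψ ∈ L²(Ω)`. -/
def IsWeakSol {d : ℕ} {Ω : Type*} [MeasurableSpace Ω] (P : Measure Ω)
    (θ : Zd d → Ω → Ω) (μ : ℝ) (ζ : Ω → Rd d) (φ : Ω → ℝ) : Prop :=
  MemLp φ 2 P ∧ ∀ ψ : Ω → ℝ, MemLp ψ 2 P →
    ∫ ω, (μ * (φ ω * ψ ω) + ∑ l, Dl θ l ψ ω * Dl θ l φ ω) ∂P
      = ∫ ω, (∑ l, Dl θ l ψ ω * ζ ω l) ∂P

/-! Non-degeneracy turns the two descriptions of `ℓ(θ_k ω)` into the pointwise identity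
`Y_k = Ỹ + Tk - Ỹ ∘ θ_k`, so the flux `ζ_i = -D(Ỹ · e_i)` is a discrete gradient. Testing the
corrector equation with `φ_{μ,i} + Ỹ · e_i` then gives `E[φ (φ + Ỹ · e_i)] ≤ 0`, hence
`E[φ²] ≤ E[(Ỹ · e_i)²]`. -/

theorem eq_of_image_add_right_eq {G : Type*} [AddGroup G] {s : Set G} {a b : G}
    (hnd : ∀ X : G, (fun x => x + X) '' s = s → X = 0)
    (h : (fun x => x + a) '' s = (fun x => x + b) '' s) : a = b := by
  refine sub_eq_zero.mp (hnd _ ?_)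
  calc (fun x => x + (a - b)) '' s = (fun x => x + -b) '' ((fun x => x + a) '' s) := by
        simp only [Set.image_image, sub_eq_add_neg, add_assoc]
    _ = s := by simp only [h, Set.image_image, add_neg_cancel_right, Set.image_id']

theorem MeasureTheory.MeasurePreserving.integral_comp_of_aestronglyMeasurable {α β E : Type*}
    [MeasurableSpace α] [MeasurableSpace β] [NormedAddCommGroup E] [NormedSpace ℝ E]
    {μ : Measure α} {ν : Measure β} {f : α → β} (hf : MeasurePreserving f μ ν) {g : β → E}
    (hg : AEStronglyMeasurable g ν) : ∫ x, g (f x) ∂μ = ∫ y, g y ∂ν := by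
  rw [← integral_map hf.aemeasurable (hf.map_eq ▸ hg), hf.map_eq]

theorem integral_sq_le_of_integral_mul_add_nonpos {α : Type*} [MeasurableSpace α]
    {μ : Measure α} {f g : α → ℝ} (hf : MemLp f 2 μ) (hg : MemLp g 2 μ)
    (h : ∫ x, f x * (f x + g x) ∂μ ≤ 0) : ∫ x, f x ^ 2 ∂μ ≤ ∫ x, g x ^ 2 ∂μ := by
  have hff : Integrable (fun x => f x ^ 2) μ := hf.integrable_sq
  have hgg : Integrable (fun x => g x ^ 2) μ := hg.integrable_sq
  have hfg : Integrable (fun x => f x * g x) μ := hf.integrable_mul hg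
  have hsplit : ∫ x, f x * (f x + g x) ∂μ = ∫ x, f x ^ 2 ∂μ + ∫ x, f x * g x ∂μ := by
    rw [← integral_add hff hfg]
    congr 1 with x
    ring
  have hamgm : -∫ x, f x * g x ∂μ ≤ (∫ x, f x ^ 2 ∂μ + ∫ x, g x ^ 2 ∂μ) / 2 := by
    rw [← integral_neg, ← integral_add hff hgg, ← integral_div]
    refine integral_mono hfg.neg ((hff.add hgg).div_const 2) fun x => ?_
    nlinarith [sq_nonneg (f x + g x)]
  linarith

theorem Dl_add {d : ℕ} {Ω : Type*} (θ : Zd d → Ω → Ω) (l : Fin d) (f g : Ω → ℝ) (ω : Ω) :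
    Dl θ l (fun ω => f ω + g ω) ω = Dl θ l f ω + Dl θ l g ω := by
  simp only [Dl]
  ring

section DifferenceOperator

variable {d : ℕ} {Ω : Type*} [MeasurableSpace Ω] {P : Measure Ω} {θ : Zd d → Ω → Ω}

theorem MeasureTheory.MemLp.Dl {p : ℝ≥0∞} (hmp : ∀ k, MeasurePreserving (θ k) P P)
    {ψ : Ω → ℝ} (hψ : MemLp ψ p P) (l : Fin d) : MemLp (Dl θ l ψ) p P :=
  (hψ.comp_measurePreserving (hmp (zbasis l))).sub hψ

/- With `ζ = -Dg`, the test function `ψ = φ + g` turns the weak formulation into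
`μ E[φ ψ] + E[|Dψ|²] = 0`. -/
theorem IsWeakSol.integral_mul_add_nonpos (hmp : ∀ k, MeasurePreserving (θ k) P P)
    {μ : ℝ} (hμ : 0 < μ) {ζ : Ω → Rd d} {φ g : Ω → ℝ} (hsol : IsWeakSol P θ μ ζ φ)
    (hg : MemLp g 2 P) (hζ : ∀ᵐ ω ∂P, ∀ l, ζ ω l = -Dl θ l g ω) :
    ∫ ω, φ ω * (φ ω + g ω) ∂P ≤ 0 := by
  obtain ⟨hφ, hweak⟩ := hsol
  set ψ : Ω → ℝ := fun ω => φ ω + g ω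
  have hψ : MemLp ψ 2 P := hφ.add hg
  have hI1 : Integrable (fun ω => μ * (φ ω * ψ ω)) P := (hφ.integrable_mul hψ).const_mul μ
  have hI2 : Integrable (fun ω => ∑ l, Dl θ l ψ ω * Dl θ l φ ω) P :=
    integrable_finsetSum _ fun l _ => (hψ.Dl hmp l).integrable_mul (hφ.Dl hmp l)
  have hI3 : Integrable (fun ω => ∑ l, Dl θ l ψ ω * Dl θ l g ω) P :=
    integrable_finsetSum _ fun l _ => (hψ.Dl hmp l).integrable_mul (hg.Dl hmp l)
  have hIsq : Integrable (fun ω => ∑ l, Dl θ l ψ ω ^ 2) P :=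
    integrable_finsetSum _ fun l _ => (hψ.Dl hmp l).integrable_sq
  have hflux : ∫ ω, ∑ l, Dl θ l ψ ω * ζ ω l ∂P = -∫ ω, ∑ l, Dl θ l ψ ω * Dl θ l g ω ∂P := by
    rw [← integral_neg]
    refine integral_congr_ae ?_
    filter_upwards [hζ] with ω hω
    simp only [hω, mul_neg, Finset.sum_neg_distrib]
  have hI12 : Integrable (fun ω => μ * (φ ω * ψ ω) + ∑ l, Dl θ l ψ ω * Dl θ l φ ω) P :=
    hI1.add hI2
  have henergy : μ * ∫ ω, φ ω * ψ ω ∂P + ∫ ω, ∑ l, Dl θ l ψ ω ^ 2 ∂P = 0 := by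
    have hsplit : (fun ω => μ * (φ ω * ψ ω) + ∑ l, Dl θ l ψ ω ^ 2) = fun ω =>
        (μ * (φ ω * ψ ω) + ∑ l, Dl θ l ψ ω * Dl θ l φ ω) + ∑ l, Dl θ l ψ ω * Dl θ l g ω := by
      funext ω
      simp only [add_assoc, ← Finset.sum_add_distrib, ← mul_add, ← Dl_add, sq, ψ]
    rw [← integral_const_mul, ← integral_add hI1 hIsq, hsplit, integral_add hI12 hI3,
      hweak ψ hψ, hflux, neg_add_cancel]
  have hsq : 0 ≤ ∫ ω, ∑ l, Dl θ l ψ ω ^ 2 ∂P :=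
    integral_nonneg fun ω => Finset.sum_nonneg fun l _ => sq_nonneg _
  exact nonpos_of_mul_nonpos_right (by linarith) hμ

end DifferenceOperator

section StationaryUpToTranslation

variable {d : ℕ} {Ω : Type} [MeasurableSpace Ω] {P : Measure Ω} {θ : Zd d → Ω → Ω}
  {ℓ : Ω → Set (Rd d)} {Y : Zd d → Ω → Rd d} {Ytil : Ω → Rd d} {T : Matrix (Fin d) (Fin d) ℝ}

theorem increment_ae_eq_of_stationary_up_to_translation
    (hstat : ∀ᵐ ω ∂P, ∀ k, ℓ (θ k ω) = (fun x => x + Y k ω) '' ℓ ω)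
    (hnd : ∀ᵐ ω ∂P, ∀ X : Rd d, (fun x => x + X) '' ℓ ω = ℓ ω → X = 0) (k : Zd d)
    (hsut : ∀ᵐ ω ∂P, (fun x => x + Ytil (θ k ω)) '' ℓ (θ k ω)
        = (fun x => x + (Ytil ω + castR (T.mulVec fun i => (k i : ℝ)))) '' ℓ ω) :
    ∀ᵐ ω ∂P, Y k ω = Ytil ω + castR (T.mulVec fun i => (k i : ℝ)) - Ytil (θ k ω) := by
  filter_upwards [hstat, hsut, hnd] with ω hℓ hYtil hω
  refine eq_sub_of_add_eq (eq_of_image_add_right_eq hω ?_)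
  rw [← hYtil, hℓ k, Set.image_image]
  simp only [add_assoc]

theorem integral_increment_eq [IsProbabilityMeasure P] {k : Zd d}
    (hmp : MeasurePreserving (θ k) P P) (hYtil : Integrable Ytil P) (hYtilm : ∫ ω, Ytil ω ∂P = 0)
    (hY : ∀ᵐ ω ∂P, Y k ω = Ytil ω + castR (T.mulVec fun i => (k i : ℝ)) - Ytil (θ k ω)) :
    ∫ ω, Y k ω ∂P = castR (T.mulVec fun i => (k i : ℝ)) := by
  have hshift : ∫ ω, Ytil (θ k ω) ∂P = 0 :=
    (hmp.integral_comp_of_aestronglyMeasurable hYtil.1).trans hYtilm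
  have hYc : Integrable (fun ω => Ytil ω + castR (T.mulVec fun i => (k i : ℝ))) P :=
    hYtil.add (integrable_const _)
  have hYθ : Integrable (fun ω => Ytil (θ k ω)) P := hmp.integrable_comp_of_integrable hYtil
  rw [integral_congr_ae hY, integral_sub hYc hYθ,
    integral_add hYtil (integrable_const _), hYtilm, hshift, integral_const]
  simp

theorem flux_ae_eq_neg_Dl [IsProbabilityMeasure P] (hmp : ∀ k, MeasurePreserving (θ k) P P)
    (hstat : ∀ᵐ ω ∂P, ∀ k, ℓ (θ k ω) = (fun x => x + Y k ω) '' ℓ ω)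
    (hnd : ∀ᵐ ω ∂P, ∀ X : Rd d, (fun x => x + X) '' ℓ ω = ℓ ω → X = 0)
    (hYtil : Integrable Ytil P) (hYtilm : ∫ ω, Ytil ω ∂P = 0)
    (hsut : ∀ k : Zd d, ∀ᵐ ω ∂P, (fun x => x + Ytil (θ k ω)) '' ℓ (θ k ω)
        = (fun x => x + (Ytil ω + castR (T.mulVec fun i => (k i : ℝ)))) '' ℓ ω)
    (i : Fin d) :
    ∀ᵐ ω ∂P, ∀ l, (castR fun l => Y (zbasis l) ω i - (∫ ω', Y (zbasis l) ω' ∂P) i) l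
      = -Dl θ l (fun ω => Ytil ω i) ω := by
  refine ae_all_iff.mpr fun l => ?_
  have hY := increment_ae_eq_of_stationary_up_to_translation hstat hnd _ (hsut (zbasis l))
  have hmean := integral_increment_eq (hmp _) hYtil hYtilm hY
  filter_upwards [hY] with ω hω
  simp only [castR, hmean, hω, Dl, PiLp.sub_apply, PiLp.add_apply]
  ring

end StationaryUpToTranslation

theorem statement6_general {d : ℕ} {Ω : Type} [MeasurableSpace Ω] (P : Measure Ω)
    [IsProbabilityMeasure P] (θ : Zd d → Ω → Ω)
    (hmp : ∀ k, MeasurePreserving (θ k) P P)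
    (ℓ : Ω → Set (Rd d))
    (Y : Zd d → Ω → Rd d)
    (hstat : ∀ᵐ ω ∂P, ∀ k, ℓ (θ k ω) = (fun x => x + Y k ω) '' ℓ ω)
    (hnd : ∀ᵐ ω ∂P, ∀ X : Rd d, (fun x => x + X) '' ℓ ω = ℓ ω → X = 0)
    (Ytil : Ω → Rd d) (hYtil2 : MemLp Ytil 2 P) (hYtilm : (∫ ω, Ytil ω ∂P) = 0)
    (T : Matrix (Fin d) (Fin d) ℝ)
    (hsut : ∀ k : Zd d, ∀ᵐ ω ∂P,
      (fun x => x + Ytil (θ k ω)) '' ℓ (θ k ω)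
        = (fun x => x + (Ytil ω + castR (T.mulVec fun i => (k i : ℝ)))) '' ℓ ω)
    (φ : ℝ → Fin d → Ω → ℝ)
    (hsol : ∀ μ : ℝ, 0 < μ → ∀ i : Fin d,
      IsWeakSol P θ μ
        (fun ω => castR fun l => Y (zbasis l) ω i - (∫ ω', Y (zbasis l) ω' ∂P) i)
        (φ μ i)) :
    (∃ C : ℝ, ∀ μ : ℝ, 0 < μ → ∀ i : Fin d, ∫ ω, (φ μ i ω) ^ 2 ∂P ≤ C) ∧
    (∀ μ : ℝ, 0 < μ → ∀ i : Fin d,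
      ∫ ω, (φ μ i ω) ^ 2 ∂P ≤ 4 * ∫ ω, (Ytil ω i) ^ 2 ∂P) := by
  have hcomp : ∀ i : Fin d, MemLp (fun ω => Ytil ω i) 2 P := fun i =>
    (EuclideanSpace.proj (𝕜 := ℝ) i).comp_memLp' hYtil2
  have key : ∀ μ : ℝ, 0 < μ → ∀ i : Fin d, ∫ ω, (φ μ i ω) ^ 2 ∂P ≤ ∫ ω, (Ytil ω i) ^ 2 ∂P :=
    fun μ hμ i => integral_sq_le_of_integral_mul_add_nonpos (hsol μ hμ i).1 (hcomp i)
      ((hsol μ hμ i).integral_mul_add_nonpos hmp hμ (hcomp i)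
        (flux_ae_eq_neg_Dl hmp hstat hnd (hYtil2.integrable one_le_two) hYtilm hsut i))
  have hsq : ∀ i : Fin d, 0 ≤ ∫ ω, (Ytil ω i) ^ 2 ∂P := fun i =>
    integral_nonneg fun ω => sq_nonneg _
  refine ⟨⟨∑ i, ∫ ω, (Ytil ω i) ^ 2 ∂P, fun μ hμ i => (key μ hμ i).trans ?_⟩,
    fun μ hμ i => (key μ hμ i).trans (le_mul_of_one_le_left (hsq i) (by norm_num))⟩
  exact Finset.single_le_sum (fun j _ => hsq j) (Finset.mem_univ i)

/-- (Proposition 1, converse direction.) If the non-degenerate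
increment-stationary random point set `ℓ` is stationary up to translation (via `Ỹ`, `T`),
then the regularized correctors are bounded in `L²(Ω)` uniformly in `μ > 0`; more
precisely `E[φ_{μ,i}²] ≤ 4 E[(Ỹ · e_i)²]`. -/
theorem statement6 {d : ℕ} {Ω : Type} [MeasurableSpace Ω] (P : Measure Ω)
    [IsProbabilityMeasure P] (θ : Zd d → Ω → Ω)
    (hmp : ∀ k, MeasurePreserving (θ k) P P) (hid : θ 0 = id)
    (hgrp : ∀ k k', θ (k + k') = θ k ∘ θ k')
    (herg : ∀ A : Set Ω, MeasurableSet A → (∀ k, θ k ⁻¹' A = A) → P A = 0 ∨ P A = 1)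
    (ℓ : Ω → Set (Rd d)) (hloc : ∀ ω, LocFin (ℓ ω))
    (Y : Zd d → Ω → Rd d) (hY2 : ∀ k, MemLp (Y k) 2 P)
    (hstat : ∀ᵐ ω ∂P, ∀ k, ℓ (θ k ω) = (fun x => x + Y k ω) '' ℓ ω)
    (hY0 : ∀ ω, Y 0 ω = 0)
    (hcoc : ∀ i j k : Zd d, ∀ᵐ ω ∂P,
      Y j (θ k ω) - Y i (θ k ω) = Y (j + k) ω - Y (i + k) ω)
    (hnd : ∀ᵐ ω ∂P, ∀ X : Rd d, (fun x => x + X) '' ℓ ω = ℓ ω → X = 0)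
    (Ytil : Ω → Rd d) (hYtil2 : MemLp Ytil 2 P) (hYtilm : (∫ ω, Ytil ω ∂P) = 0)
    (T : Matrix (Fin d) (Fin d) ℝ)
    (hsut : ∀ k : Zd d, ∀ᵐ ω ∂P,
      (fun x => x + Ytil (θ k ω)) '' ℓ (θ k ω)
        = (fun x => x + (Ytil ω + castR (T.mulVec fun i => (k i : ℝ)))) '' ℓ ω)
    (φ : ℝ → Fin d → Ω → ℝ)
    (hsol : ∀ μ : ℝ, 0 < μ → ∀ i : Fin d,
      IsWeakSol P θ μ
        (fun ω => castR fun l => Y (zbasis l) ω i - (∫ ω', Y (zbasis l) ω' ∂P) i)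
        (φ μ i)) :
    (∃ C : ℝ, ∀ μ : ℝ, 0 < μ → ∀ i : Fin d, ∫ ω, (φ μ i ω) ^ 2 ∂P ≤ C) ∧
    (∀ μ : ℝ, 0 < μ → ∀ i : Fin d,
      ∫ ω, (φ μ i ω) ^ 2 ∂P ≤ 4 * ∫ ω, (Ytil ω i) ^ 2 ∂P) :=
  statement6_general P θ hmp ℓ Y hstat hnd Ytil hYtil2 hYtilm T hsut φ hsol
end
end

section
/- Let $d \in \{1,2\}$. For $\mu > 0$ let $G_\mu \in \ell^2(\mathbb{Z}^d)$ be the Green's function of $\mu - \triangle$ on $\mathbb{Z}^d$, i.e. the unique $\ell^2$ solution of $\mu\,G_\mu - \triangle G_\mu = \delta$, and let $\partial G_\mu = (\partial_1 G_\mu, \dots, \partial_d G_\mu)$ with $\partial_l u(x) := u(x+e_l) - u(x)$. Then $\sup_{0 < \mu \le 1} \sum_{y \in \mathbb{Z}^d} |\partial G_\mu(y)|^2 = \infty$; that is, the family $\{\partial G_\mu\}_{0 < \mu \le 1}$ is not bounded in $\ell^2(\mathbb{Z}^d,\mathbb{R}^d)$. -/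
open MeasureTheory Filter
open scoped ENNReal BigOperators

noncomputable section

variable {d : ℕ}

/-- The discrete Laplacian on `ℤ^d`. -/
def discLap {d : ℕ} (u : Zd d → ℝ) (x : Zd d) : ℝ :=
  ∑ l, (u (x + zbasis l) + u (x - zbasis l) - 2 * u x)

/- The discrete Dirac mass at the origin of `ℤ^d`. -/
open Classical in
def ddelta {d : ℕ} (x : Zd d) : ℝ := if x = 0 then 1 else 0

/-!
Suppose `∑ |∂G_μ|² ≤ C` for all `μ ∈ (0, 1]`. Testing `μ G - ΔG = δ` against `G` itself gives
`μ ‖G‖² ≤ G(0)`, and telescoping `G²` along a coordinate ray gives `G(0)² ≲ ‖G‖ ‖∂₁G‖`; together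
`μ⁴ ‖G‖⁶ ≤ 4 C`, so `μ² ‖G_μ‖² → 0`. In dimension `d ≤ 2` there are finitely supported `φ` with
`φ(0) = 1` and arbitrarily small Dirichlet energy (logarithmic cutoffs, built from harmonic
numbers). Testing the equation against such a `φ` gives `1 = μ ⟨G_μ, φ⟩ + ⟨∂G_μ, ∂φ⟩`, and by
Cauchy–Schwarz both terms are small once `μ` is small: a contradiction.
-/

open fwdDiff

section SquareSummable

variable {ι : Type*} {f g : ι → ℝ}

theorem Summable.mul_of_sq (hf : Summable fun i => f i ^ 2) (hg : Summable fun i => g i ^ 2) :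
    Summable fun i => f i * g i :=
  Summable.of_norm_bounded ((hf.add hg).div_const 2) fun i => by
    rw [Real.norm_eq_abs, abs_mul]
    nlinarith [sq_nonneg (|f i| - |g i|), sq_abs (f i), sq_abs (g i)]

theorem Summable.sq_sub (hf : Summable fun i => f i ^ 2) (hg : Summable fun i => g i ^ 2) :
    Summable fun i => (f i - g i) ^ 2 :=
  Summable.of_nonneg_of_le (fun _ => sq_nonneg _)
    (fun i => by nlinarith [sq_nonneg (f i + g i)]) ((hf.add hg).mul_left 2)

theorem sq_tsum_sum_mul_le {κ : Type*} [Fintype κ] {f g : ι → κ → ℝ}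
    (hf : Summable fun i => ∑ k, f i k ^ 2) (hg : Summable fun i => ∑ k, g i k ^ 2) :
    (∑' i, ∑ k, f i k * g i k) ^ 2 ≤ (∑' i, ∑ k, f i k ^ 2) * ∑' i, ∑ k, g i k ^ 2 := by
  have hfg : Summable fun i => ∑ k, f i k * g i k :=
    Summable.of_norm_bounded ((hf.add hg).div_const 2) fun i => by
      rw [Real.norm_eq_abs, abs_le, ← Finset.sum_add_distrib, Finset.sum_div,
        ← Finset.sum_neg_distrib]
      constructor <;> refine Finset.sum_le_sum fun k _ => ?_ <;>
        nlinarith [sq_nonneg (f i k - g i k), sq_nonneg (f i k + g i k)]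
  refine le_of_tendsto' (hfg.hasSum.pow 2) fun s => ?_
  have hcs := Finset.sum_mul_sq_le_sq_mul_sq (s ×ˢ Finset.univ) (fun p => f p.1 p.2)
    (fun p => g p.1 p.2)
  simp only [Finset.sum_product] at hcs
  refine hcs.trans (mul_le_mul (hf.sum_le_tsum s fun i _ => ?_) (hg.sum_le_tsum s fun i _ => ?_)
    (Finset.sum_nonneg fun i _ => ?_) (tsum_nonneg fun i => ?_)) <;> positivity

theorem sq_tsum_mul_le (hf : Summable fun i => f i ^ 2) (hg : Summable fun i => g i ^ 2) :
    (∑' i, f i * g i) ^ 2 ≤ (∑' i, f i ^ 2) * ∑' i, g i ^ 2 := by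
  simpa using sq_tsum_sum_mul_le (κ := Unit) (f := fun i _ => f i) (g := fun i _ => g i)
    (by simpa using hf) (by simpa using hg)

end SquareSummable

section AddCommGroup

variable {α : Type*} [AddCommGroup α] {u φ : α → ℝ}

theorem Summable.fwdDiff_sq (hu : Summable fun x => u x ^ 2) (e : α) :
    Summable fun x => Δ_[e] u x ^ 2 :=
  (hu.comp_injective (add_left_injective e)).sq_sub hu

theorem hasSum_second_diff_mul (hu : Summable fun x => u x ^ 2)
    (hφ : Summable fun x => φ x ^ 2) (e : α) :
    HasSum (fun x => (u (x + e) + u (x - e) - 2 * u x) * φ x)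
      (-∑' x, Δ_[e] u x * Δ_[e] φ x) := by
  have hshift : ∀ a : α, Summable fun x => u (x + a) ^ 2 :=
    fun a => hu.comp_injective (add_left_injective a)
  have hA := (hu.mul_of_sq hφ).hasSum
  have hP := ((hshift e).mul_of_sq hφ).hasSum
  have hM := ((hshift (-e)).mul_of_sq hφ).hasSum
  have hA' : HasSum (fun x => u (x + e) * φ (x + e)) (∑' x, u x * φ x) :=
    (Equiv.addRight e).hasSum_iff.2 hA
  have hM' : HasSum (fun x => u x * φ (x + e)) (∑' x, u (x + -e) * φ x) := by
    simpa [Function.comp_def] using (Equiv.addRight e).hasSum_iff.2 hM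
  have hdiff : (fun x => Δ_[e] u x * Δ_[e] φ x) = fun x =>
      u (x + e) * φ (x + e) - u (x + e) * φ x - u x * φ (x + e) + u x * φ x := by
    funext x; simp only [fwdDiff]; ring
  have hlap : (fun x => (u (x + e) + u (x - e) - 2 * u x) * φ x) = fun x =>
      u (x + e) * φ x + u (x + -e) * φ x - 2 * (u x * φ x) := by
    funext x; rw [sub_eq_add_neg x e]; ring
  rw [hdiff, (((hA'.sub hP).sub hM').add hA).tsum_eq, hlap]
  have h := (hP.add hM).sub (hA.mul_left 2)
  rwa [show ∀ a b c : ℝ, a + b - 2 * c = -(c - a - b + c) by intros; ring] at h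

/-- Telescoping along the ray `k • e`, `k ∈ ℕ`, on which `u ^ 2` tends to `0`. -/
theorem sq_apply_zero_le_tsum_abs_sub (hu : Summable fun x => u x ^ 2) {e : α}
    (he : Function.Injective fun k : ℕ => k • e) :
    u 0 ^ 2 ≤ ∑' x, |u (x + e) ^ 2 - u x ^ 2| := by
  have hshift : Summable fun x => u (x + e) ^ 2 := hu.comp_injective (add_left_injective e)
  have hW : Summable fun x => |u (x + e) ^ 2 - u x ^ 2| :=
    Summable.of_nonneg_of_le (fun _ => abs_nonneg _)
      (fun x => abs_le.2 ⟨by nlinarith [sq_nonneg (u (x + e))], by nlinarith [sq_nonneg (u x)]⟩)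
      (hshift.add hu)
  have htel : ∀ N : ℕ, u 0 ^ 2 - u (N • e) ^ 2 ≤ ∑' x, |u (x + e) ^ 2 - u x ^ 2| := fun N =>
    calc u 0 ^ 2 - u (N • e) ^ 2 = ∑ k ∈ Finset.range N, (u (k • e) ^ 2 - u ((k + 1) • e) ^ 2) := by
          rw [Finset.sum_range_sub' (fun k => u (k • e) ^ 2), zero_nsmul]
      _ ≤ ∑ k ∈ Finset.range N, |u (k • e + e) ^ 2 - u (k • e) ^ 2| :=
          Finset.sum_le_sum fun k _ => by rw [succ_nsmul, abs_sub_comm]; exact le_abs_self _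
      _ ≤ ∑' k : ℕ, |u (k • e + e) ^ 2 - u (k • e) ^ 2| :=
          (hW.comp_injective he).sum_le_tsum _ fun _ _ => abs_nonneg _
      _ ≤ ∑' x, |u (x + e) ^ 2 - u x ^ 2| :=
          tsum_comp_le_tsum_of_inj hW (fun _ => abs_nonneg _) he
  have hlim : Tendsto (fun N : ℕ => u 0 ^ 2 - u (N • e) ^ 2) atTop (nhds (u 0 ^ 2 - 0)) :=
    tendsto_const_nhds.sub (hu.comp_injective he).tendsto_atTop_zero
  exact le_of_tendsto' (by simpa using hlim) htel

theorem two_mul_mul_sq_apply_zero_le (hu : Summable fun x => u x ^ 2) {e : α}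
    (he : Function.Injective fun k : ℕ => k • e) {ε : ℝ} (hε : 0 < ε) :
    2 * ε * u 0 ^ 2 ≤ ∑' x, Δ_[e] u x ^ 2 + 4 * ε ^ 2 * ∑' x, u x ^ 2 := by
  have hshift : Summable fun x => u (x + e) ^ 2 := hu.comp_injective (add_left_injective e)
  have hshift_tsum : ∑' x, u (x + e) ^ 2 = ∑' x, u x ^ 2 :=
    (Equiv.addRight e).tsum_eq fun x => u x ^ 2
  have hbound : HasSum (fun x => Δ_[e] u x ^ 2 + 2 * ε ^ 2 * (u (x + e) ^ 2 + u x ^ 2))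
      (∑' x, Δ_[e] u x ^ 2 + 4 * ε ^ 2 * ∑' x, u x ^ 2) := by
    have h := (hu.fwdDiff_sq e).hasSum.add ((hshift.hasSum.add hu.hasSum).mul_left (2 * ε ^ 2))
    rwa [hshift_tsum,
      show ∀ b : ℝ, 2 * ε ^ 2 * (b + b) = 4 * ε ^ 2 * b by intro; ring] at h
  -- `2 ε |a² - b²| = 2 (ε |a + b|) |a - b| ≤ (a - b)² + ε² (a + b)²`
  have hpt : ∀ x, 2 * ε * |u (x + e) ^ 2 - u x ^ 2|
      ≤ Δ_[e] u x ^ 2 + 2 * ε ^ 2 * (u (x + e) ^ 2 + u x ^ 2) := fun x => by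
    have hfac : |u (x + e) ^ 2 - u x ^ 2| = |u (x + e) + u x| * |Δ_[e] u x| := by
      rw [← abs_mul, fwdDiff]; ring_nf
    rw [hfac]
    nlinarith [sq_nonneg (ε * |u (x + e) + u x| - |Δ_[e] u x|), sq_abs (u (x + e) + u x),
      sq_abs (Δ_[e] u x), sq_nonneg (u (x + e) - u x)]
  calc 2 * ε * u 0 ^ 2 ≤ 2 * ε * ∑' x, |u (x + e) ^ 2 - u x ^ 2| :=
        mul_le_mul_of_nonneg_left (sq_apply_zero_le_tsum_abs_sub hu he) (by positivity)
    _ = ∑' x, 2 * ε * |u (x + e) ^ 2 - u x ^ 2| := tsum_mul_left.symm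
    _ ≤ _ := hasSum_le hpt
        (Summable.of_nonneg_of_le (fun _ => by positivity) hpt hbound.summable).hasSum hbound

end AddCommGroup

section Lattice

open Finset

variable {u φ : Zd d → ℝ} {μ : ℝ}

def dirichletForm (u φ : Zd d → ℝ) : ℝ := ∑' x, ∑ l, Δ_[zbasis l] u x * Δ_[zbasis l] φ x

theorem hasSum_discLap_mul (hu : Summable fun x => u x ^ 2) (hφ : Summable fun x => φ x ^ 2) :
    HasSum (fun x => discLap u x * φ x) (-dirichletForm u φ) := by
  have h := hasSum_sum fun l (_ : l ∈ univ) => hasSum_second_diff_mul hu hφ (zbasis l)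
  rw [sum_neg_distrib, ← Summable.tsum_finsetSum fun l _ =>
    (hu.fwdDiff_sq (zbasis l)).mul_of_sq (hφ.fwdDiff_sq (zbasis l))] at h
  simpa only [discLap, sum_mul, dirichletForm] using h

theorem tsum_ddelta_mul (φ : Zd d → ℝ) : ∑' x, ddelta x * φ x = φ 0 := by
  rw [tsum_eq_single 0 fun x hx => by simp [ddelta, hx]]
  simp [ddelta]

theorem apply_zero_eq_of_resolvent (hu : Summable fun x => u x ^ 2)
    (heq : ∀ x, μ * u x - discLap u x = ddelta x) (hφ : Summable fun x => φ x ^ 2) :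
    φ 0 = μ * ∑' x, u x * φ x + dirichletForm u φ := by
  rw [← tsum_ddelta_mul φ, ← tsum_mul_left, ← neg_neg (dirichletForm u φ),
    ← (hasSum_discLap_mul hu hφ).tsum_eq, ← sub_eq_add_neg,
    ← Summable.tsum_sub ((hu.mul_of_sq hφ).mul_left μ) (hasSum_discLap_mul hu hφ).summable]
  exact tsum_congr fun x => by rw [← heq x]; ring

theorem injective_nsmul_zbasis (l : Fin d) : Function.Injective fun k : ℕ => k • zbasis l :=
  fun a b h => by simpa [zbasis] using congrFun h l

theorem Summable.sum_fwdDiff_zbasis_sq (hu : Summable fun x => u x ^ 2) :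
    Summable fun x => ∑ l, Δ_[zbasis l] u x ^ 2 :=
  summable_sum fun l _ => hu.fwdDiff_sq (zbasis l)

theorem dirichletForm_self (u : Zd d → ℝ) :
    dirichletForm u u = ∑' x, ∑ l, Δ_[zbasis l] u x ^ 2 := by
  simp only [dirichletForm, sq]

theorem dirichletForm_self_nonneg (u : Zd d → ℝ) : 0 ≤ dirichletForm u u := by
  rw [dirichletForm_self]; positivity

theorem tsum_fwdDiff_sq_le_dirichletForm (hu : Summable fun x => u x ^ 2) (l : Fin d) :
    ∑' x, Δ_[zbasis l] u x ^ 2 ≤ dirichletForm u u := by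
  rw [dirichletForm_self]
  exact (hu.fwdDiff_sq _).tsum_le_tsum
    (fun x => single_le_sum (f := fun l => Δ_[zbasis l] u x ^ 2) (fun _ _ => sq_nonneg _)
      (mem_univ l)) hu.sum_fwdDiff_zbasis_sq

theorem sq_dirichletForm_le (hu : Summable fun x => u x ^ 2) (hφ : Summable fun x => φ x ^ 2) :
    dirichletForm u φ ^ 2 ≤ dirichletForm u u * dirichletForm φ φ := by
  rw [dirichletForm_self, dirichletForm_self]
  exact sq_tsum_sum_mul_le hu.sum_fwdDiff_zbasis_sq hφ.sum_fwdDiff_zbasis_sq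

theorem ofReal_dirichletForm_self (hu : Summable fun x => u x ^ 2) :
    ENNReal.ofReal (dirichletForm u u) = ∑' x, ENNReal.ofReal (∑ l, Δ_[zbasis l] u x ^ 2) := by
  rw [dirichletForm_self, ENNReal.ofReal_tsum_of_nonneg (fun x => by positivity)
    hu.sum_fwdDiff_zbasis_sq]

theorem mul_tsum_sq_le_apply_zero (hu : Summable fun x => u x ^ 2)
    (heq : ∀ x, μ * u x - discLap u x = ddelta x) : μ * ∑' x, u x ^ 2 ≤ u 0 := by
  have h := apply_zero_eq_of_resolvent hu heq hu
  simp only [← sq] at h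
  linarith [dirichletForm_self_nonneg u]

theorem pow_four_mul_pow_three_le (hμ : 0 < μ) (hu : Summable fun x => u x ^ 2)
    (heq : ∀ x, μ * u x - discLap u x = ddelta x) (l : Fin d) :
    μ ^ 4 * (∑' x, u x ^ 2) ^ 3 ≤ 4 * ∑' x, Δ_[zbasis l] u x ^ 2 := by
  set N := ∑' x, u x ^ 2
  have hE : 0 ≤ ∑' x, Δ_[zbasis l] u x ^ 2 := tsum_nonneg fun _ => sq_nonneg _
  have hN0 : 0 ≤ N := tsum_nonneg fun _ => sq_nonneg _
  rcases hN0.eq_or_lt with hN | hN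
  · rw [← hN]; linarith
  have hε : 0 < μ ^ 2 * N / 4 := by positivity
  have hsq : (μ * N) ^ 2 ≤ u 0 ^ 2 :=
    pow_le_pow_left₀ (by positivity) (mul_tsum_sq_le_apply_zero hu heq) 2
  have hsob := two_mul_mul_sq_apply_zero_le hu (injective_nsmul_zbasis l) hε
  nlinarith [mul_le_mul_of_nonneg_left hsq hε.le]

theorem mul_tsum_mul_pow_six_le (hμ : 0 < μ) (hu : Summable fun x => u x ^ 2)
    (heq : ∀ x, μ * u x - discLap u x = ddelta x) (hφ : Summable fun x => φ x ^ 2) (l : Fin d) :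
    (μ * ∑' x, u x * φ x) ^ 6
      ≤ 4 * μ ^ 2 * (∑' x, Δ_[zbasis l] u x ^ 2) * (∑' x, φ x ^ 2) ^ 3 := by
  have hcs := sq_tsum_mul_le hu hφ
  have hN : 0 ≤ ∑' x, u x ^ 2 := tsum_nonneg fun _ => sq_nonneg _
  have hS : 0 ≤ ∑' x, φ x ^ 2 := tsum_nonneg fun _ => sq_nonneg _
  calc (μ * ∑' x, u x * φ x) ^ 6 = μ ^ 6 * ((∑' x, u x * φ x) ^ 2) ^ 3 := by ring
    _ ≤ μ ^ 6 * ((∑' x, u x ^ 2) * ∑' x, φ x ^ 2) ^ 3 := by gcongr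
    _ = μ ^ 2 * (μ ^ 4 * (∑' x, u x ^ 2) ^ 3) * (∑' x, φ x ^ 2) ^ 3 := by ring
    _ ≤ μ ^ 2 * (4 * ∑' x, Δ_[zbasis l] u x ^ 2) * (∑' x, φ x ^ 2) ^ 3 := by
        gcongr μ ^ 2 * ?_ * _; exact pow_four_mul_pow_three_le hμ hu heq l
    _ = _ := by ring

theorem three_fourths_pow_six_le_of_resolvent (hμ : 0 < μ) (hu : Summable fun x => u x ^ 2)
    (heq : ∀ x, μ * u x - discLap u x = ddelta x) {C : ℝ} (hC : dirichletForm u u ≤ C)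
    (hφ : Summable fun x => φ x ^ 2) (hφ0 : φ 0 = 1)
    (hφE : dirichletForm φ φ ≤ 1 / (16 * (C + 1))) (l : Fin d) :
    (3 / 4 : ℝ) ^ 6 ≤ 4 * C * (∑' x, φ x ^ 2) ^ 3 * μ ^ 2 := by
  have hC0 : 0 ≤ C := (dirichletForm_self_nonneg u).trans hC
  have hform : dirichletForm u φ ^ 2 ≤ 1 / 16 :=
    calc _ ≤ C * (1 / (16 * (C + 1))) := (sq_dirichletForm_le hu hφ).trans
          (mul_le_mul hC hφE (dirichletForm_self_nonneg φ) hC0)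
      _ ≤ 1 / 16 := by rw [mul_one_div, div_le_div_iff₀ (by positivity) (by norm_num)]; linarith
  have hmass : 3 / 4 ≤ μ * ∑' x, u x * φ x := by
    have := apply_zero_eq_of_resolvent hu heq hφ
    nlinarith
  calc (3 / 4 : ℝ) ^ 6 ≤ (μ * ∑' x, u x * φ x) ^ 6 := pow_le_pow_left₀ (by norm_num) hmass 6
    _ ≤ 4 * μ ^ 2 * (∑' x, Δ_[zbasis l] u x ^ 2) * (∑' x, φ x ^ 2) ^ 3 :=
        mul_tsum_mul_pow_six_le hμ hu heq hφ l
    _ ≤ 4 * μ ^ 2 * C * (∑' x, φ x ^ 2) ^ 3 := by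
        gcongr; exact (tsum_fwdDiff_sq_le_dirichletForm hu l).trans hC
    _ = _ := by ring

theorem dirichletForm_le_toReal_iSup {G : ℝ → Zd d → ℝ} {s : Set ℝ}
    (hG : ∀ μ ∈ s, Summable fun x => G μ x ^ 2)
    (hB : (⨆ μ ∈ s, ∑' y, ENNReal.ofReal (∑ l, Δ_[zbasis l] (G μ) y ^ 2)) ≠ ⊤)
    {μ : ℝ} (hμ : μ ∈ s) :
    dirichletForm (G μ) (G μ)
      ≤ (⨆ μ ∈ s, ∑' y, ENNReal.ofReal (∑ l, Δ_[zbasis l] (G μ) y ^ 2)).toReal :=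
  (ENNReal.ofReal_le_iff_le_toReal hB).1 <| (ofReal_dirichletForm_self (hG μ hμ)).trans_le <|
    le_iSup₂ (f := fun μ (_ : μ ∈ s) => ∑' y, ENNReal.ofReal (∑ l, Δ_[zbasis l] (G μ) y ^ 2)) μ hμ

end Lattice

section Cutoff

open Finset

def supNorm (x : Zd d) : ℕ := univ.sup fun i => (x i).natAbs

theorem natAbs_le_supNorm (x : Zd d) (i : Fin d) : (x i).natAbs ≤ supNorm x :=
  le_sup (f := fun i => (x i).natAbs) (mem_univ i)

theorem supNorm_le_iff {x : Zd d} {r : ℕ} : supNorm x ≤ r ↔ ∀ i, (x i).natAbs ≤ r := by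
  simp [supNorm]

theorem mem_Icc_iff_supNorm_le {x : Zd d} {r : ℕ} :
    x ∈ Icc (-(r : Zd d)) r ↔ supNorm x ≤ r := by
  simp only [mem_Icc, supNorm_le_iff, Pi.le_def, ← forall_and]
  refine forall_congr' fun i => ?_
  simp only [Pi.neg_apply, Pi.natCast_apply]
  omega

theorem supNorm_zero : supNorm (0 : Zd d) = 0 := by
  simpa using (supNorm_le_iff (x := (0 : Zd d)) (r := 0)).2 fun i => by simp

theorem supNorm_add_zbasis (x : Zd d) (l : Fin d) :
    supNorm (x + zbasis l) ≤ supNorm x + 1 ∧ supNorm x ≤ supNorm (x + zbasis l) + 1 := by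
  have h : ∀ i, ((x + zbasis l) i - x i).natAbs ≤ 1 := fun i => by
    simp only [Pi.add_apply, add_sub_cancel_left, zbasis, Pi.single_apply]
    split_ifs <;> simp
  constructor <;> refine supNorm_le_iff.2 fun i => ?_ <;>
    have := h i <;> have := natAbs_le_supNorm x i <;> have := natAbs_le_supNorm (x + zbasis l) i <;>
    omega

theorem card_Icc_neg_natCast (r : ℕ) : #(Icc (-(r : Zd d)) r) = (2 * r + 1) ^ d := by
  rw [Pi.card_Icc]
  simp only [Pi.neg_apply, Pi.natCast_apply, Int.card_Icc, prod_const, card_univ, Fintype.card_fin]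
  congr 1
  omega

theorem Icc_neg_natCast_subset_succ (R : ℕ) :
    Icc (-(R : Zd d)) R ⊆ Icc (-((R + 1 : ℕ) : Zd d)) (R + 1 : ℕ) := fun x hx => by
  rw [mem_Icc_iff_supNorm_le] at hx ⊢; omega

theorem card_Icc_succ_sdiff_le (hd : d ≤ 2) (R : ℕ) :
    #(Icc (-((R + 1 : ℕ) : Zd d)) (R + 1 : ℕ) \ Icc (-(R : Zd d)) R) ≤ 8 * (R + 1) := by
  rw [card_sdiff_of_subset (Icc_neg_natCast_subset_succ R), card_Icc_neg_natCast,
    card_Icc_neg_natCast]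
  interval_cases d <;> simp <;> ring_nf <;> omega

theorem sum_Icc_inv_supNorm_add_one_sq_le (hd : d ≤ 2) (R : ℕ) :
    ∑ x ∈ Icc (-(R : Zd d)) R, 1 / ((supNorm x : ℝ) + 1) ^ 2 ≤ 8 * (harmonic (R + 1) : ℝ) := by
  induction R with
  | zero =>
    calc ∑ x ∈ Icc (-((0 : ℕ) : Zd d)) (0 : ℕ), 1 / ((supNorm x : ℝ) + 1) ^ 2
        ≤ #(Icc (-((0 : ℕ) : Zd d)) (0 : ℕ)) • (1 : ℝ) :=
          sum_le_card_nsmul _ _ _ fun x _ =>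
            div_le_one_of_le₀ (one_le_pow₀ (le_add_of_nonneg_left (Nat.cast_nonneg _)))
              (by positivity)
      _ ≤ 8 * (harmonic (0 + 1) : ℝ) := by norm_num [card_Icc_neg_natCast]
  | succ R ih =>
    have hshell : ∀ x ∈ Icc (-((R + 1 : ℕ) : Zd d)) (R + 1 : ℕ) \ Icc (-(R : Zd d)) R,
        1 / ((supNorm x : ℝ) + 1) ^ 2 = 1 / ((R : ℝ) + 2) ^ 2 := fun x hx => by
      rw [Finset.mem_sdiff, mem_Icc_iff_supNorm_le, mem_Icc_iff_supNorm_le] at hx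
      rw [show supNorm x = R + 1 by omega]; push_cast; ring
    have hcard : (#(Icc (-((R + 1 : ℕ) : Zd d)) (R + 1 : ℕ) \ Icc (-(R : Zd d)) R) : ℝ)
        ≤ 8 * ((R : ℝ) + 1) := by
      exact_mod_cast card_Icc_succ_sdiff_le hd R
    rw [← sum_sdiff (Icc_neg_natCast_subset_succ R), sum_congr rfl hshell, sum_const, nsmul_eq_mul]
    calc _ ≤ 8 * ((R : ℝ) + 1) * (1 / ((R : ℝ) + 2) ^ 2) + 8 * (harmonic (R + 1) : ℝ) := by
          gcongr
      _ ≤ 8 * (harmonic (R + 1 + 1) : ℝ) := by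
          rw [harmonic_succ (R + 1)]
          push_cast
          have : ((R : ℝ) + 1) * (1 / ((R : ℝ) + 2) ^ 2) ≤ ((R : ℝ) + 1 + 1)⁻¹ := by
            rw [inv_eq_one_div, mul_one_div, div_le_div_iff₀ (by positivity) (by positivity)]
            nlinarith
          linarith

/-- Discrete analogue of `1 - log (1 + r) / log (1 + R)`, truncated at `R`. -/
def cutoffProfile (R r : ℕ) : ℝ := 1 - harmonic (min r R) / harmonic R

theorem cutoffProfile_zero (R : ℕ) : cutoffProfile R 0 = 1 := by
  simp [cutoffProfile]

theorem cutoffProfile_of_le {R r : ℕ} (hR : R ≠ 0) (h : R ≤ r) : cutoffProfile R r = 0 := by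
  have : (0 : ℝ) < harmonic R := by exact_mod_cast harmonic_pos hR
  rw [cutoffProfile, min_eq_right h, div_self this.ne', sub_self]

theorem abs_cutoffProfile_sub_succ_le {R : ℕ} (hR : R ≠ 0) (r : ℕ) :
    |cutoffProfile R r - cutoffProfile R (r + 1)| ≤ 1 / ((r + 1) * harmonic R) := by
  have hH : (0 : ℝ) < harmonic R := by exact_mod_cast harmonic_pos hR
  rcases lt_or_ge r R with h | h
  · rw [cutoffProfile, cutoffProfile, min_eq_left h.le, min_eq_left h, harmonic_succ]
    push_cast
    rw [show ∀ a b : ℝ, 1 - a / harmonic R - (1 - (a + b) / harmonic R) = b / harmonic R by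
      intros; ring, abs_of_nonneg (by positivity), inv_eq_one_div, div_div]
  · rw [cutoffProfile_of_le hR h, cutoffProfile_of_le hR (by omega), sub_self, abs_zero]
    positivity

def cutoff (R : ℕ) (x : Zd d) : ℝ := cutoffProfile R (supNorm x)

theorem abs_fwdDiff_cutoff_le {R : ℕ} (hR : R ≠ 0) (x : Zd d) (l : Fin d) :
    |Δ_[zbasis l] (cutoff R) x| ≤ 2 / ((supNorm x + 1) * harmonic R) := by
  have hH : (0 : ℝ) < harmonic R := by exact_mod_cast harmonic_pos hR
  obtain ⟨h₁, h₂⟩ := supNorm_add_zbasis x l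
  simp only [fwdDiff, cutoff]
  rcases (by omega : supNorm (x + zbasis l) = supNorm x + 1 ∨
      supNorm (x + zbasis l) = supNorm x ∨ supNorm (x + zbasis l) + 1 = supNorm x) with h | h | h
  · rw [h, abs_sub_comm]
    refine (abs_cutoffProfile_sub_succ_le hR _).trans ?_
    gcongr; norm_num
  · rw [h, sub_self, abs_zero]; positivity
  · rw [← h]
    refine (abs_cutoffProfile_sub_succ_le hR _).trans ?_
    push_cast
    rw [div_le_div_iff₀ (by positivity) (by positivity)]
    nlinarith [(supNorm (x + zbasis l)).cast_nonneg (α := ℝ)]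

theorem cutoff_eq_zero {R : ℕ} (hR : R ≠ 0) {x : Zd d} (hx : x ∉ Icc (-(R : Zd d)) R) :
    cutoff R x = 0 :=
  cutoffProfile_of_le hR (by rw [mem_Icc_iff_supNorm_le] at hx; omega)

theorem dirichletForm_cutoff_le (hd : d ≤ 2) {R : ℕ} (hR : R ≠ 0) :
    dirichletForm (cutoff R : Zd d → ℝ) (cutoff R) ≤ 64 * (harmonic R + 1) / harmonic R ^ 2 := by
  have hH : (0 : ℝ) < harmonic R := by exact_mod_cast harmonic_pos hR
  have hsupp : ∀ x ∉ Icc (-(R : Zd d)) R, ∑ l, Δ_[zbasis l] (cutoff R) x ^ 2 = 0 := fun x hx =>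
    sum_eq_zero fun l _ => by
      rw [mem_Icc_iff_supNorm_le, not_le] at hx
      have := (supNorm_add_zbasis x l).2
      rw [fwdDiff, cutoff, cutoff, cutoffProfile_of_le hR (by omega),
        cutoffProfile_of_le hR (by omega), sub_self, sq, mul_zero]
  have hpt : ∀ x : Zd d, ∑ l, Δ_[zbasis l] (cutoff R) x ^ 2
      ≤ 8 / (harmonic R : ℝ) ^ 2 * (1 / ((supNorm x : ℝ) + 1) ^ 2) := fun x => by
    calc ∑ l, Δ_[zbasis l] (cutoff R) x ^ 2
        ≤ ∑ _l : Fin d, (2 / ((supNorm x + 1) * (harmonic R : ℝ))) ^ 2 :=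
          sum_le_sum fun l _ => sq_le_sq' (abs_le.1 (abs_fwdDiff_cutoff_le hR x l)).1
            (abs_le.1 (abs_fwdDiff_cutoff_le hR x l)).2
      _ ≤ 8 / (harmonic R : ℝ) ^ 2 * (1 / ((supNorm x : ℝ) + 1) ^ 2) := by
          have hd' : (d : ℝ) ≤ 2 := by exact_mod_cast hd
          rw [sum_const, card_univ, Fintype.card_fin, nsmul_eq_mul]
          calc (d : ℝ) * (2 / ((supNorm x + 1) * (harmonic R : ℝ))) ^ 2
              = d * 4 / (((supNorm x : ℝ) + 1) ^ 2 * (harmonic R : ℝ) ^ 2) := by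
                rw [div_pow, mul_pow]; ring
            _ ≤ 8 / (((supNorm x : ℝ) + 1) ^ 2 * (harmonic R : ℝ) ^ 2) := by gcongr; linarith
            _ = _ := by rw [div_mul_div_comm, mul_one, mul_comm]
  have hHsucc : (harmonic (R + 1) : ℝ) ≤ harmonic R + 1 := by
    rw [harmonic_succ]; push_cast
    gcongr
    exact inv_le_one_of_one_le₀ (by simp)
  rw [dirichletForm_self, tsum_eq_sum hsupp]
  calc ∑ x ∈ Icc (-(R : Zd d)) R, ∑ l, Δ_[zbasis l] (cutoff R) x ^ 2
      ≤ ∑ x ∈ Icc (-(R : Zd d)) R, 8 / (harmonic R : ℝ) ^ 2 * (1 / ((supNorm x : ℝ) + 1) ^ 2) :=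
        sum_le_sum fun x _ => hpt x
    _ ≤ 8 / (harmonic R : ℝ) ^ 2 * (8 * (harmonic R + 1)) := by
        rw [← mul_sum]
        gcongr
        exact (sum_Icc_inv_supNorm_add_one_sq_le hd R).trans (by linarith)
    _ = 64 * (harmonic R + 1) / harmonic R ^ 2 := by ring

theorem exists_cutoff (hd : d ≤ 2) {ε : ℝ} (hε : 0 < ε) :
    ∃ φ : Zd d → ℝ, φ 0 = 1 ∧ (Summable fun x => φ x ^ 2) ∧ dirichletForm φ φ ≤ ε := by
  have htend : Tendsto (fun n : ℕ => (harmonic n : ℝ)) atTop atTop :=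
    tendsto_atTop_mono log_add_one_le_harmonic
      (Real.tendsto_log_atTop.comp (tendsto_natCast_atTop_atTop.comp (tendsto_add_atTop_nat 1)))
  obtain ⟨R, hR⟩ := (htend.eventually_ge_atTop (max 1 (128 / ε))).exists
  have hH1 : 1 ≤ (harmonic R : ℝ) := (le_max_left _ _).trans hR
  have hR0 : R ≠ 0 := by rintro rfl; norm_num at hH1
  refine ⟨cutoff R, by simp [cutoff, supNorm_zero, cutoffProfile_zero],
    summable_of_ne_finset_zero (s := Icc (-(R : Zd d)) R) fun x hx => by
      rw [cutoff_eq_zero hR0 hx]; norm_num, (dirichletForm_cutoff_le hd hR0).trans ?_⟩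
  have hε' : 128 / ε ≤ harmonic R := (le_max_right _ _).trans hR
  rw [div_le_iff₀ (by positivity)]
  rw [div_le_iff₀ hε] at hε'
  nlinarith

end Cutoff

theorem exists_mem_Ioc_mul_sq_lt (K : ℝ) {c : ℝ} (hc : 0 < c) :
    ∃ μ ∈ Set.Ioc (0 : ℝ) 1, K * μ ^ 2 < c := by
  have hlim : Tendsto (fun μ : ℝ => K * μ ^ 2) (nhdsWithin 0 (Set.Ioi 0)) (nhds 0) := by
    simpa using ((by fun_prop : Continuous fun μ : ℝ => K * μ ^ 2).tendsto 0).mono_left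
      nhdsWithin_le_nhds
  obtain ⟨μ, hlt, hμ⟩ := ((hlim.eventually (gt_mem_nhds hc)).and (Ioc_mem_nhdsGT one_pos)).exists
  exact ⟨μ, hμ, hlt⟩

/-- In dimensions `d ∈ {1,2}`, the gradients `∂G_μ` of the massive
Green's functions are not bounded in `ℓ²(ℤ^d, ℝ^d)` uniformly over `μ ∈ (0,1]`:
`sup_{0<μ≤1} ∑_y |∂G_μ(y)|² = ∞`. -/
theorem statement11 (d : ℕ) (hd : d = 1 ∨ d = 2) (G : ℝ → Zd d → ℝ)
    (hG : ∀ μ : ℝ, 0 < μ → (Summable fun x => (G μ x) ^ 2) ∧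
      ∀ x : Zd d, μ * G μ x - discLap (G μ) x = ddelta x) :
    (⨆ (μ : ℝ) (_ : μ ∈ Set.Ioc (0 : ℝ) 1),
      ∑' y : Zd d, ENNReal.ofReal (∑ l, (G μ (y + zbasis l) - G μ y) ^ 2)) = ⊤ := by
  by_contra hB
  set C := (⨆ (μ : ℝ) (_ : μ ∈ Set.Ioc (0 : ℝ) 1),
    ∑' y : Zd d, ENNReal.ofReal (∑ l, (G μ (y + zbasis l) - G μ y) ^ 2)).toReal
  have hGC : ∀ μ ∈ Set.Ioc (0 : ℝ) 1, dirichletForm (G μ) (G μ) ≤ C := fun μ hμ =>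
    dirichletForm_le_toReal_iSup (fun μ hμ => (hG μ hμ.1).1) hB hμ
  obtain ⟨φ, hφ0, hφ, hφE⟩ := exists_cutoff (by omega : d ≤ 2)
    (by positivity : (0 : ℝ) < 1 / (16 * (C + 1)))
  obtain ⟨μ, hμ, hsmall⟩ := exists_mem_Ioc_mul_sq_lt (4 * C * (∑' x, φ x ^ 2) ^ 3)
    (by norm_num : (0 : ℝ) < (3 / 4) ^ 6)
  obtain ⟨hu, heq⟩ := hG μ hμ.1
  exact (three_fourths_pow_six_le_of_resolvent hμ.1 hu heq (hGC μ hμ) hφ hφ0 hφE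
    ⟨0, by omega⟩).not_gt hsmall
end
end

section
/- Let $d > 2$ and $2 < \alpha < d$, and let $C_0 \ge 1$. Let $F : \mathbb{Z}^d \to [0,\infty)$ satisfy: (i) $F(y) \le C_0$ for all $y \in \mathbb{Z}^d$; and (ii) for every $p \in [1,\infty)$ and every integer $i \ge 1$: $\sum_{2^i < |y| \le 2^{i+1}} F(y)^p \le C_0\,(2^i)^d (2^i)^{p(1-d)}$. Then there exists a constant $C < \infty$ depending only on $d$, $\alpha$, and $C_0$ such that $\sum_{y \in \mathbb{Z}^d} \sum_{y' \in \mathbb{Z}^d} F(y)\,F(y')\,\frac{1}{1 + |y - y'|^\alpha} \le C$. -/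
/-!
Taking `p = i` in the annulus bound at a single point gives the pointwise decay
`F y ≤ c (1 + |y|)^(1-d)`, and the kernel is at most `2^α (1 + |y - y'|)^(-α)`.
Put `u = 1 + |y|`, `u' = 1 + |y'|`, `v = 1 + |y - y'| ≤ u + u'` and say `u ≤ u'`, so `v ≤ 2u'`.
Splitting `u'^(1-d) = u'^(-α/2) u'^(-(d-α/2-1))` (both exponents are negative since `2 < α < d`)
and trading the first factor against `u` and the second against `v/2` gives
`(u u')^(1-d) v^(-α) ≲ u^(-σ) v^(-σ)` with `σ = d + α/2 - 1`, and `σ > d` because `α > 2`.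
After translating `y'` by `y`, the double sum is therefore at most a constant times
`(∑_y (1 + |y|)^(-σ))²`, which is finite since `σ > d`.
-/

open MeasureTheory Filter
open scoped ENNReal BigOperators

noncomputable section

variable {d : ℕ}

lemma castZ_zero : castZ (0 : Zd d) = 0 := by
  ext; simp [castZ]

lemma castZ_sub (a b : Zd d) : castZ (a - b) = castZ a - castZ b := by
  ext; simp [castZ]

lemma castZ_injective : Function.Injective (castZ : Zd d → Rd d) := by
  intro a b h; ext i; simpa [castZ] using congrFun (congrArg WithLp.ofLp h) i

lemma summable_norm_castZ_rpow {r : ℝ} (hr : r < -d) :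
    Summable fun y : Zd d => ‖castZ y‖ ^ r := by
  let b := (EuclideanSpace.basisFun (Fin d) ℝ).toBasis
  let bZ := b.restrictScalars ℤ
  have hrank : Module.finrank ℤ (Submodule.span ℤ (Set.range b)) = d := by
    simp [Module.finrank_eq_card_basis bZ]
  have hcoe (y : Zd d) : (bZ.equivFun.symm y : Rd d) = castZ y := by
    ext i
    simp only [Module.Basis.equivFun_symm_apply, Submodule.coe_sum, Submodule.coe_smul_of_tower,
      bZ, Module.Basis.restrictScalars_apply]
    simp [b, castZ, Pi.single_apply]
  have := ZLattice.summable_norm_rpow (Submodule.span ℤ (Set.range b)) r (by rw [hrank]; exact hr)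
  rw [← bZ.equivFun.symm.toEquiv.summable_iff] at this
  simpa only [Function.comp_def, LinearEquiv.coe_toEquiv, Submodule.coe_norm, hcoe] using this

def powWeight (s : ℝ) (y : Zd d) : ℝ := (1 + ‖castZ y‖) ^ s

lemma powWeight_nonneg (s : ℝ) (y : Zd d) : 0 ≤ powWeight s y := by
  unfold powWeight; positivity

lemma summable_powWeight {s : ℝ} (hs : s < -d) : Summable (powWeight s : Zd d → ℝ) := by
  refine (summable_norm_castZ_rpow hs).of_norm_bounded_eventually ?_
  filter_upwards [(Set.finite_singleton (0 : Zd d)).compl_mem_cofinite] with y hy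
  have hy : 0 < ‖castZ y‖ := by
    rw [norm_pos_iff, ← castZ_zero]
    exact castZ_injective.ne hy
  rw [powWeight, Real.norm_of_nonneg (by positivity)]
  exact Real.rpow_le_rpow_of_nonpos hy (by linarith) (by linarith [(d.cast_nonneg : (0:ℝ) ≤ d)])

lemma le_of_tsum_ite_ofReal_le {ι : Type*} {P : ι → Prop} [DecidablePred P] {f : ι → ℝ} {A : ℝ}
    (hA : 0 ≤ A) (h : ∑' x, (if P x then ENNReal.ofReal (f x) else 0) ≤ ENNReal.ofReal A)
    {x : ι} (hx : P x) : f x ≤ A := by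
  rw [← ENNReal.ofReal_le_ofReal_iff hA]
  calc ENNReal.ofReal (f x) = if P x then ENNReal.ofReal (f x) else 0 := (if_pos hx).symm
    _ ≤ ∑' x, (if P x then ENNReal.ofReal (f x) else 0) := ENNReal.le_tsum x
    _ ≤ ENNReal.ofReal A := h

lemma le_of_rpow_le_dyadic {C₀ D a : ℝ} {i : ℕ} (hC₀ : 1 ≤ C₀) (ha : 0 ≤ a) (hi : 1 ≤ i)
    (h : a ^ (i : ℝ) ≤ C₀ * ((2 : ℝ) ^ i) ^ D * ((2 : ℝ) ^ i) ^ ((i : ℝ) * (1 - D))) :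
    a ≤ C₀ * (2 : ℝ) ^ D * ((2 : ℝ) ^ i) ^ (1 - D) := by
  have hi0 : i ≠ 0 := by omega
  refine (pow_le_pow_iff_left₀ ha (by positivity) hi0).mp ?_
  calc a ^ i = a ^ (i : ℝ) := (Real.rpow_natCast a i).symm
    _ ≤ C₀ * ((2 : ℝ) ^ i) ^ D * ((2 : ℝ) ^ i) ^ ((i : ℝ) * (1 - D)) := h
    _ ≤ C₀ ^ i * ((2 : ℝ) ^ i) ^ D * ((2 : ℝ) ^ i) ^ ((i : ℝ) * (1 - D)) := by
        gcongr; exact le_self_pow₀ hC₀ hi0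
    _ = (C₀ * (2 : ℝ) ^ D * ((2 : ℝ) ^ i) ^ (1 - D)) ^ i := by
        have h2 : ((2 : ℝ) ^ i) ^ D = ((2 : ℝ) ^ D) ^ i := by
          rw [← Real.rpow_natCast, ← Real.rpow_mul zero_le_two, ← Real.rpow_natCast,
            ← Real.rpow_mul zero_le_two, mul_comm]
        rw [mul_pow, mul_pow, h2,
          ← Real.rpow_mul_natCast (by positivity : (0 : ℝ) ≤ 2 ^ i) (1 - D) i, mul_comm (1 - D)]

lemma exists_pow_lt_le_pow_succ {r : ℝ} (hr : 2 < r) :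
    ∃ i : ℕ, 1 ≤ i ∧ (2 : ℝ) ^ i < r ∧ r ≤ (2 : ℝ) ^ (i + 1) := by
  obtain ⟨n, hn1, hn2⟩ := exists_mem_Ioc_zpow (by linarith : (0 : ℝ) < r) one_lt_two
  have hn : 1 ≤ n := by
    have : (2 : ℝ) ^ (1 : ℤ) < 2 ^ (n + 1) := by rw [zpow_one]; linarith
    have := (zpow_lt_zpow_iff_right₀ one_lt_two).mp this
    omega
  lift n to ℕ using by omega
  refine ⟨n, by exact_mod_cast hn, by exact_mod_cast hn1, by exact_mod_cast hn2⟩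

lemma le_mul_powWeight_of_dyadic {C₀ : ℝ} (hd : 1 ≤ d) (hC₀ : 1 ≤ C₀) {F : Zd d → ℝ}
    (hF0 : ∀ y, 0 ≤ F y) (hFC : ∀ y, F y ≤ C₀)
    (hF : ∀ p : ℝ, 1 ≤ p → ∀ i : ℕ, 1 ≤ i →
        (∑' y : Zd d, (if (2:ℝ) ^ i < ‖castZ y‖ ∧ ‖castZ y‖ ≤ (2:ℝ) ^ (i+1)
            then ENNReal.ofReal (F y ^ p) else 0))
          ≤ ENNReal.ofReal (C₀ * ((2:ℝ) ^ i) ^ (d : ℝ) * ((2:ℝ) ^ i) ^ (p * (1 - (d : ℝ)))))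
    (y : Zd d) :
    F y ≤ 3 ^ ((d : ℝ) - 1) * 2 ^ (d : ℝ) * C₀ * powWeight (1 - (d : ℝ)) y := by
  unfold powWeight
  have hd' : (1 : ℝ) ≤ d := by exact_mod_cast hd
  have h3 : (3 : ℝ) ^ ((d : ℝ) - 1) * (3 : ℝ) ^ (1 - (d : ℝ)) = 1 := by
    rw [← Real.rpow_add (by norm_num)]; simp
  rcases le_or_gt ‖castZ y‖ 2 with hy | hy
  · calc F y ≤ C₀ := hFC y
      _ = 3 ^ ((d : ℝ) - 1) * 1 * C₀ * (3 : ℝ) ^ (1 - (d : ℝ)) := by linear_combination -C₀ * h3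
      _ ≤ _ := by
          gcongr 3 ^ ((d : ℝ) - 1) * ?_ * C₀ * ?_
          · exact Real.one_le_rpow one_le_two (Nat.cast_nonneg d)
          · exact Real.rpow_le_rpow_of_nonpos (by positivity) (by linarith) (by linarith)
  · obtain ⟨i, hi, hyi⟩ := exists_pow_lt_le_pow_succ hy
    -- `p = i`: the `i`-th root tames both `C₀` and the volume factor `2 ^ (i * d)`
    have hFi :
        F y ^ (i : ℝ) ≤ C₀ * ((2:ℝ) ^ i) ^ (d : ℝ) * ((2:ℝ) ^ i) ^ ((i : ℝ) * (1 - (d : ℝ))) :=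
      le_of_tsum_ite_ofReal_le (f := fun z => F z ^ (i : ℝ))
        (P := fun z => (2:ℝ) ^ i < ‖castZ z‖ ∧ ‖castZ z‖ ≤ (2:ℝ) ^ (i+1)) (by positivity)
        (hF i (by exact_mod_cast hi) i hi) hyi
    refine (le_of_rpow_le_dyadic hC₀ (hF0 y) hi hFi).trans ?_
    have h2i : (1 + ‖castZ y‖) / 3 ≤ (2 : ℝ) ^ i := by
      rw [pow_succ] at hyi; linarith [hyi.2]
    calc C₀ * 2 ^ (d : ℝ) * ((2 : ℝ) ^ i) ^ (1 - (d : ℝ))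
        ≤ C₀ * 2 ^ (d : ℝ) * ((1 + ‖castZ y‖) / 3) ^ (1 - (d : ℝ)) := by
          gcongr C₀ * 2 ^ (d : ℝ) * ?_
          exact Real.rpow_le_rpow_of_nonpos (by positivity) h2i (by linarith)
      _ = _ := by
          rw [Real.div_rpow (by positivity) (by positivity), div_eq_mul_inv,
            ← Real.rpow_neg (by positivity), neg_sub]
          ring

lemma inv_one_add_rpow_le {r α : ℝ} (hr : 0 ≤ r) (hα : 0 ≤ α) :
    (1 + r ^ α)⁻¹ ≤ 2 ^ α * (1 + r) ^ (-α) := by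
  have key : (1 + r) ^ α ≤ 2 ^ α * (1 + r ^ α) := by
    rcases le_total r 1 with h | h
    · calc (1 + r) ^ α ≤ 2 ^ α := by gcongr; linarith
        _ ≤ 2 ^ α * (1 + r ^ α) :=
          le_mul_of_one_le_right (by positivity) (by linarith [Real.rpow_nonneg hr α])
    · calc (1 + r) ^ α ≤ (2 * r) ^ α := by gcongr; linarith
        _ = 2 ^ α * r ^ α := Real.mul_rpow zero_le_two hr
        _ ≤ 2 ^ α * (1 + r ^ α) := by gcongr; linarith
  rw [Real.rpow_neg (by positivity), ← div_eq_mul_inv, le_div_iff₀ (by positivity),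
    inv_mul_le_iff₀ (by positivity), mul_comm]
  exact key

lemma rpow_mul_rpow_le_of_le {D α u u' v : ℝ} (hα : 0 ≤ α) (hαD : α + 2 ≤ 2 * D) (hu : 0 < u)
    (huu' : u ≤ u') (hv : 0 < v) (hvu' : v ≤ 2 * u') :
    (u * u') ^ (1 - D) * v ^ (-α) ≤
      2 ^ (D - α / 2 - 1) * (u ^ (-(D + α / 2 - 1)) * v ^ (-(D + α / 2 - 1))) := by
  have hu' : 0 < u' := hu.trans_le huu'
  have h1 : u' ^ (-(α / 2)) ≤ u ^ (-(α / 2)) := Real.rpow_le_rpow_of_nonpos hu huu' (by linarith)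
  have h2 : u' ^ (-(D - α / 2 - 1)) ≤ (v / 2) ^ (-(D - α / 2 - 1)) :=
    Real.rpow_le_rpow_of_nonpos (by positivity) (by linarith) (by linarith)
  have e1 : u' ^ (1 - D) = u' ^ (-(α / 2)) * u' ^ (-(D - α / 2 - 1)) := by
    rw [← Real.rpow_add hu']; ring_nf
  have e2 : u ^ (-(D + α / 2 - 1)) = u ^ (1 - D) * u ^ (-(α / 2)) := by
    rw [← Real.rpow_add hu]; ring_nf
  have e3 : v ^ (-(D + α / 2 - 1)) = v ^ (-(D - α / 2 - 1)) * v ^ (-α) := by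
    rw [← Real.rpow_add hv]; ring_nf
  have e4 : (v / 2) ^ (-(D - α / 2 - 1)) = 2 ^ (D - α / 2 - 1) * v ^ (-(D - α / 2 - 1)) := by
    rw [Real.div_rpow hv.le zero_le_two, Real.rpow_neg zero_le_two (D - α / 2 - 1), div_inv_eq_mul,
      mul_comm]
  calc (u * u') ^ (1 - D) * v ^ (-α)
      = u ^ (1 - D) * u' ^ (-(α / 2)) * u' ^ (-(D - α / 2 - 1)) * v ^ (-α) := by
        rw [Real.mul_rpow hu.le hu'.le, e1]; ring
    _ ≤ u ^ (1 - D) * u ^ (-(α / 2)) * (v / 2) ^ (-(D - α / 2 - 1)) * v ^ (-α) := by gcongr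
    _ = 2 ^ (D - α / 2 - 1) * (u ^ (-(D + α / 2 - 1)) * v ^ (-(D + α / 2 - 1))) := by
        rw [e2, e3, e4]; ring

lemma rpow_mul_rpow_le_add {D α u u' v : ℝ} (hα : 0 ≤ α) (hαD : α + 2 ≤ 2 * D) (hu : 0 < u)
    (hu' : 0 < u') (hv : 0 < v) (hvu : v ≤ u + u') :
    (u * u') ^ (1 - D) * v ^ (-α) ≤
      2 ^ (D - α / 2 - 1) * ((u ^ (-(D + α / 2 - 1)) + u' ^ (-(D + α / 2 - 1))) *
        v ^ (-(D + α / 2 - 1))) := by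
  rcases le_total u u' with h | h
  · refine (rpow_mul_rpow_le_of_le hα hαD hu h hv (by linarith)).trans ?_
    gcongr
    exact le_add_of_nonneg_right (by positivity)
  · rw [mul_comm u]
    refine (rpow_mul_rpow_le_of_le hα hαD hu' h hv (by linarith)).trans ?_
    gcongr
    exact le_add_of_nonneg_left (by positivity)

lemma ENNReal.tsum_tsum_mul_sub_left {G : Type*} [AddCommGroup G] (f g : G → ℝ≥0∞) :
    ∑' x, ∑' y, f x * g (x - y) = (∑' x, f x) * ∑' y, g y := by
  have hg (x : G) : ∑' y, g (x - y) = ∑' y, g y := (Equiv.subLeft x).tsum_eq g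
  simp_rw [ENNReal.tsum_mul_left, hg, ENNReal.tsum_mul_right]

lemma ENNReal.tsum_tsum_mul_sub_right {G : Type*} [AddCommGroup G] (f g : G → ℝ≥0∞) :
    ∑' x, ∑' y, f y * g (x - y) = (∑' y, f y) * ∑' x, g x := by
  rw [ENNReal.tsum_comm]
  have hg (y : G) : ∑' x, g (x - y) = ∑' x, g x := (Equiv.subRight y).tsum_eq g
  simp_rw [ENNReal.tsum_mul_left, hg, ENNReal.tsum_mul_right]

lemma mul_mul_inv_one_add_rpow_le {c D α : ℝ} {F : Zd d → ℝ} (hα : 0 ≤ α) (hαD : α + 2 ≤ 2 * D)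
    (hF0 : ∀ y, 0 ≤ F y) (hF : ∀ y, F y ≤ c * powWeight (1 - D) y) (y y' : Zd d) :
    F y * F y' * (1 + ‖castZ (y - y')‖ ^ α)⁻¹ ≤
      c ^ 2 * 2 ^ α * 2 ^ (D - α / 2 - 1) *
        ((powWeight (-(D + α / 2 - 1)) y + powWeight (-(D + α / 2 - 1)) y') *
          powWeight (-(D + α / 2 - 1)) (y - y')) := by
  have hv : 1 + ‖castZ (y - y')‖ ≤ (1 + ‖castZ y‖) + (1 + ‖castZ y'‖) := by
    rw [castZ_sub]; linarith [norm_sub_le (castZ y) (castZ y')]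
  calc F y * F y' * (1 + ‖castZ (y - y')‖ ^ α)⁻¹
      ≤ c * powWeight (1 - D) y * (c * powWeight (1 - D) y') *
          (2 ^ α * powWeight (-α) (y - y')) :=
        mul_le_mul (mul_le_mul (hF y) (hF y') (hF0 y') ((hF0 y).trans (hF y)))
          (inv_one_add_rpow_le (norm_nonneg _) hα) (by positivity)
          (mul_nonneg ((hF0 y).trans (hF y)) ((hF0 y').trans (hF y')))
    _ = c ^ 2 * 2 ^ α * (((1 + ‖castZ y‖) * (1 + ‖castZ y'‖)) ^ (1 - D) *
          (1 + ‖castZ (y - y')‖) ^ (-α)) := by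
        rw [Real.mul_rpow (by positivity) (by positivity)]
        simp only [powWeight]
        ring
    _ ≤ _ := by
        rw [mul_assoc _ (2 ^ (D - α / 2 - 1))]
        exact mul_le_mul_of_nonneg_left
          (rpow_mul_rpow_le_add hα hαD (by positivity) (by positivity) (by positivity) hv)
          (by positivity)

open Classical in
/-- The deterministic double-sum estimate: for `d > 2`, `2 < α < d`,
any nonnegative `F : ℤ^d → [0,∞)` bounded by `C₀` and satisfying the dyadic annulus
bounds `∑_{2^i<|y|≤2^{i+1}} F(y)^p ≤ C₀ 2^{id} 2^{ip(1-d)}` satisfies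
`∑_{y,y'} F(y) F(y') (1+|y-y'|^α)⁻¹ ≤ C` with `C = C(d,α,C₀)`. -/
theorem statement12 (d : ℕ) (hd : 2 < d) (α : ℝ) (hα1 : 2 < α) (hα2 : α < d)
    (C₀ : ℝ) (hC₀ : 1 ≤ C₀) :
    ∃ C : ℝ, ∀ F : Zd d → ℝ, (∀ y, 0 ≤ F y) → (∀ y, F y ≤ C₀) →
      (∀ p : ℝ, 1 ≤ p → ∀ i : ℕ, 1 ≤ i →
        (∑' y : Zd d, (if (2:ℝ) ^ i < ‖castZ y‖ ∧ ‖castZ y‖ ≤ (2:ℝ) ^ (i+1)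
            then ENNReal.ofReal (F y ^ p) else 0))
          ≤ ENNReal.ofReal (C₀ * ((2:ℝ) ^ i) ^ (d : ℝ) * ((2:ℝ) ^ i) ^ (p * (1 - (d : ℝ))))) →
      (∑' y : Zd d, ∑' y' : Zd d,
          ENNReal.ofReal (F y * F y' * (1 + ‖castZ (y - y')‖ ^ α)⁻¹))
        ≤ ENNReal.ofReal C := by
  set σ : ℝ := d + α / 2 - 1 with hσ
  set K : ℝ := (3 ^ ((d : ℝ) - 1) * 2 ^ (d : ℝ) * C₀) ^ 2 * 2 ^ α * 2 ^ ((d : ℝ) - α / 2 - 1)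
  set W : Zd d → ℝ≥0∞ := fun y => ENNReal.ofReal (powWeight (-σ) y)
  have hW : ∑' y, W y ≠ ⊤ := by
    rw [← ENNReal.ofReal_tsum_of_nonneg (fun _ => powWeight_nonneg _ _)
      (summable_powWeight (by rw [hσ]; linarith))]
    exact ENNReal.ofReal_ne_top
  refine ⟨(ENNReal.ofReal K * ((∑' y, W y) * ∑' y, W y + (∑' y, W y) * ∑' y, W y)).toReal,
    fun F hF0 hFC hF => ?_⟩
  rw [ENNReal.ofReal_toReal (by finiteness)]
  have hFle := le_mul_powWeight_of_dyadic (by omega) hC₀ hF0 hFC hF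
  calc ∑' y, ∑' y', ENNReal.ofReal (F y * F y' * (1 + ‖castZ (y - y')‖ ^ α)⁻¹)
      ≤ ∑' y, ∑' y', ENNReal.ofReal K * (W y * W (y - y') + W y' * W (y - y')) := by
        refine ENNReal.tsum_le_tsum fun y => ENNReal.tsum_le_tsum fun y' => ?_
        have hW0 (z : Zd d) : 0 ≤ powWeight (-σ) z := powWeight_nonneg _ _
        rw [← ENNReal.ofReal_mul (hW0 _), ← ENNReal.ofReal_mul (hW0 _),
          ← ENNReal.ofReal_add (mul_nonneg (hW0 _) (hW0 _)) (mul_nonneg (hW0 _) (hW0 _)),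
          ← ENNReal.ofReal_mul (by positivity), ← add_mul]
        exact ENNReal.ofReal_le_ofReal
          (mul_mul_inv_one_add_rpow_le (by linarith) (by linarith) hF0 hFle y y')
    _ = _ := by
        simp_rw [ENNReal.tsum_mul_left, ENNReal.tsum_add, ENNReal.tsum_tsum_mul_sub_left,
          ENNReal.tsum_tsum_mul_sub_right]
end
end
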